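/- arXiv:math/0507554 — 7 statements merged into one kernel-verified Lean document; each statement's English description precedes it below -/
import Mathlib

section
/- If the Jacobi operators of an algebraic curvature tensor R on a finite-dimensional real inner product space V (dim V ≥ 3) all commute, i.e. J(x)J(y) = J(y)J(x) for all x, y ∈ V, then R = 0. -/
open scoped InnerProductSpace
noncomputable section

variable {V : Type*} [NormedAddCommGroup V] [InnerProductSpace ℝ V]

/-- `R` satisfies the symmetries of an algebraic curvature tensor. -/
def IsCurvatureOperator (R : V →ₗ[ℝ] V →ₗ[ℝ] V →ₗ[ℝ] V) : Prop :=
  (∀ x y z w : V, ⟪R x y z, w⟫_ℝ = ⟪R z w x, y⟫_ℝ) ∧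
  (∀ x y z w : V, ⟪R x y z, w⟫_ℝ = - ⟪R y x z, w⟫_ℝ) ∧
  (∀ x y z w : V, ⟪R x y z, w⟫_ℝ + ⟪R y z x, w⟫_ℝ + ⟪R z x y, w⟫_ℝ = 0)

/-- The Jacobi operator `J(x) : y ↦ R(y,x)x`. -/
def Jacobi (R : V →ₗ[ℝ] V →ₗ[ℝ] V →ₗ[ℝ] V) (x : V) : V →ₗ[ℝ] V where
  toFun y := R y x x
  map_add' a b := by simp
  map_smul' c a := by simp

/-- The polarized Jacobi operator `J(x,y) : z ↦ ½R(z,x)y + ½R(z,y)x`. -/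
def JacobiP (R : V →ₗ[ℝ] V →ₗ[ℝ] V →ₗ[ℝ] V) (x y : V) : V →ₗ[ℝ] V where
  toFun z := (1/2 : ℝ) • R z x y + (1/2 : ℝ) • R z y x
  map_add' a b := by simp; module
  map_smul' c a := by simp; module

/-- `R` is Jacobi-Tsankov: Jacobi operators of orthogonal vectors commute. -/
def JacobiTsankov (R : V →ₗ[ℝ] V →ₗ[ℝ] V →ₗ[ℝ] V) : Prop :=
  ∀ x y : V, ⟪x, y⟫_ℝ = 0 → Jacobi R x ∘ₗ Jacobi R y = Jacobi R y ∘ₗ Jacobi R x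

theorem stmt0 [FiniteDimensional ℝ V] (hm : 3 ≤ Module.finrank ℝ V)
    (R : V →ₗ[ℝ] V →ₗ[ℝ] V →ₗ[ℝ] V) (hR : IsCurvatureOperator R)
    (hcomm : ∀ x y : V, Jacobi R x ∘ₗ Jacobi R y = Jacobi R y ∘ₗ Jacobi R x) :
    R = 0 := by
  obtain ⟨hpair, hanti, hbianchi⟩ := hR
  -- antisymmetry in the last two slots
  have hanti34 : ∀ a b c d : V, ⟪R a b c, d⟫_ℝ = -⟪R a b d, c⟫_ℝ := by
    intro a b c d
    rw [hpair a b c d, hanti c d a b, hpair d c a b]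
  -- R u u z = 0
  have hRuu : ∀ u z : V, R u u z = 0 := by
    intro u z
    apply ext_inner_right ℝ
    intro w
    have h := hanti u u z w
    simp only [inner_zero_left]
    linarith
  -- symmetry of the Jacobi operator, inner-product form
  have hsymJ : ∀ x u v : V, ⟪R u x x, v⟫_ℝ = ⟪R v x x, u⟫_ℝ := by
    intro x u v
    rw [hpair u x x v, hanti34 x v u x, hanti x v x u, neg_neg]
  have hJapp : ∀ (x u : V), Jacobi R x u = R u x x := fun _ _ => rfl
  have hsym : ∀ x : V, (Jacobi R x).IsSymmetric := by
    intro x u v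
    rw [hJapp, hJapp, hsymJ x u v]
    exact real_inner_comm _ _
  -- the set of joint eigenvectors
  set P : Set V := {u : V | ∃ χ : V → ℝ, ∀ x : V, R u x x = χ x • u} with hP
  -- joint eigenvectors span V
  have hcomm' : Pairwise (Function.onFun Commute fun x : V => Jacobi R x) := by
    intro x y _
    show Jacobi R x * Jacobi R y = Jacobi R y * Jacobi R x
    rw [Module.End.mul_eq_comp, Module.End.mul_eq_comp, hcomm x y]
  have htop := LinearMap.IsSymmetric.iSup_iInf_eq_top_of_commute hsym hcomm'
  have hspan : Submodule.span ℝ P = ⊤ := by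
    rw [eq_top_iff, ← htop]
    apply iSup_le
    intro χ
    intro v hv
    apply Submodule.subset_span
    refine ⟨χ, fun x => ?_⟩
    have hx := (Submodule.mem_iInf _).mp hv x
    rw [Module.End.mem_eigenspace_iff] at hx
    rw [← hJapp x v, hx]
  -- eigenvalue functionals vanish identically
  have hchizero : ∀ (u : V), u ≠ 0 → ∀ χ : V → ℝ, (∀ x, R u x x = χ x • u) →
      ∀ p, χ p = 0 := by
    intro u hne χ hu p
    have huu : ⟪u, u⟫_ℝ ≠ 0 := by
      simpa [real_inner_self_eq_norm_sq] using fun h => hne (by simpa using h)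
    by_cases hop : ⟪u, p⟫_ℝ = 0
    · -- polarization: R u p u + R u u p = c • u
      have hexp : R u (p + u) (p + u) = R u p p + (R u p u + R u u p) + R u u u := by
        simp only [map_add, LinearMap.add_apply]
        abel
      rw [hu (p + u), hu p, hu u] at hexp
      have hpu : R u p u + R u u p = χ (p + u) • u - χ p • u - χ u • u := by
        rw [hexp]; abel
      have h3 : ⟪R u p u, p⟫_ℝ = 0 := by
        have h4 := congrArg (fun w : V => ⟪w, p⟫_ℝ) hpu
        simpa [hRuu, inner_add_left, inner_sub_left, real_inner_smul_left, hop] using h4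
      have h6 : ⟪R u p p, u⟫_ℝ = χ p * ⟪u, u⟫_ℝ := by
        rw [hu p]; exact real_inner_smul_left _ _ _
      have h7 := hanti34 u p p u
      rw [h6, h3] at h7
      have : χ p * ⟪u, u⟫_ℝ = 0 := by simpa using h7
      exact (mul_eq_zero.mp this).resolve_right huu
    · have h6 : ⟪R u p p, p⟫_ℝ = χ p * ⟪u, p⟫_ℝ := by
        rw [hu p]; exact real_inner_smul_left _ _ _
      have h7 : ⟪R u p p, p⟫_ℝ = 0 := by
        rw [hsymJ p u p, hRuu]; simp
      rw [h7] at h6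
      exact ((mul_eq_zero.mp h6.symm).resolve_right hop)
  -- Jacobi operators vanish on joint eigenvectors
  have hJP : ∀ u ∈ P, ∀ x : V, R u x x = 0 := by
    rintro u ⟨χ, hu⟩ x
    by_cases hne : u = 0
    · subst hne; simp
    · rw [hu x, hchizero u hne χ hu x, zero_smul]
  -- hence they vanish identically
  have hJzero : ∀ (x u : V), R u x x = 0 := by
    intro x
    have hfg : ((R.flip x).flip x) = (0 : V →ₗ[ℝ] V) :=
      LinearMap.ext_on hspan (fun u hu => by
        simpa using hJP u hu x)
    intro u
    have := LinearMap.congr_fun hfg u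
    simpa using this
  -- polarization: antisymmetry in the middle slots
  have h23 : ∀ a y z v : V, ⟪R a y z, v⟫_ℝ = -⟪R a z y, v⟫_ℝ := by
    intro a y z v
    have hexp : R a (y + z) (y + z) = R a y y + (R a y z + R a z y) + R a z z := by
      simp only [map_add, LinearMap.add_apply]
      abel
    rw [hJzero (y + z) a, hJzero y a, hJzero z a] at hexp
    have hsum : R a y z + R a z y = 0 := by
      have := hexp.symm
      simpa using this
    have := congrArg (fun w : V => ⟪w, v⟫_ℝ) hsum
    simp only [inner_add_left, inner_zero_left] at this
    linarith
  -- Bianchi finishes: every component vanishes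
  have hS : ∀ a b c d : V, ⟪R a b c, d⟫_ℝ = 0 := by
    intro a b c d
    have hb := hbianchi a b c d
    have e1 : ⟪R b c a, d⟫_ℝ = ⟪R a b c, d⟫_ℝ := by
      rw [h23 b c a d, hanti b a c d, neg_neg]
    have e2 : ⟪R c a b, d⟫_ℝ = ⟪R a b c, d⟫_ℝ := by
      rw [h23 c a b d, hanti c b a d, neg_neg, e1]
    rw [e1, e2] at hb
    linarith
  -- conclude R = 0
  ext a b c
  apply ext_inner_right ℝ
  intro w
  simpa using hS a b c w
end
end

section
/- Let Θ be a Hermitian almost complex structure on V (Θ² = -id, Θ* = -Θ) and let R_Θ(x,y)z = ⟨Θy,z⟩Θx - ⟨Θx,z⟩Θy - 2⟨Θx,y⟩Θz. Then for x ⊥ y, the associated Jacobi operators commute: J(x)J(y) = J(y)J(x). Hence R_Θ is Jacobi-Tsankov. -/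
/-! Since `Θ` is skew, `⟪Θx, x⟫ = 0`, and the Jacobi operator of `R_Θ` collapses to the rank-one map
`J(x) y = 3⟪Θx, y⟫ Θx`. As `Θ` is moreover orthogonal, `x ⊥ y` gives `Θx ⊥ Θy`, so
`J(x) J(y) = 0 = J(y) J(x)`. -/

open scoped InnerProductSpace
noncomputable section

variable {V : Type*} [NormedAddCommGroup V] [InnerProductSpace ℝ V]

/-- The curvature operator `R_Θ(x,y)z = ⟪Θy,z⟪Θx - ⟪Θx,z⟪Θy - 2⟪Θx,y⟪Θz`
associated to an endomorphism `Θ`. -/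
def thetaCurvOp (Θ : V →ₗ[ℝ] V) : V →ₗ[ℝ] V →ₗ[ℝ] V →ₗ[ℝ] V where
  toFun x :=
  { toFun := fun y =>
    { toFun := fun z => ⟪Θ y, z⟫_ℝ • Θ x - ⟪Θ x, z⟫_ℝ • Θ y - (2 * ⟪Θ x, y⟫_ℝ) • Θ z
      map_add' := by intros; simp [inner_add_left, inner_add_right]; module
      map_smul' := by intros; simp [inner_smul_left, inner_smul_right]; module }
    map_add' := by intros; ext z; simp [inner_add_left, inner_add_right]; module
    map_smul' := by intros; ext z; simp [inner_smul_left, inner_smul_right]; module }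
  map_add' := by intros; ext y z; simp [inner_add_left]; module
  map_smul' := by intros; ext y z; simp [inner_smul_left]; module

section SkewEndomorphism

variable {Θ : V →ₗ[ℝ] V}

theorem inner_apply_self_eq_zero_of_skew (hskew : ∀ u v : V, ⟪Θ u, v⟫_ℝ = -⟪u, Θ v⟫_ℝ) (u : V) :
    ⟪Θ u, u⟫_ℝ = 0 := by
  linarith [hskew u u, real_inner_comm u (Θ u)]

theorem inner_map_map_of_skew_of_sq_eq_neg_id (h2 : Θ ∘ₗ Θ = -LinearMap.id)
    (hskew : ∀ u v : V, ⟪Θ u, v⟫_ℝ = -⟪u, Θ v⟫_ℝ) (u v : V) :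
    ⟪Θ u, Θ v⟫_ℝ = ⟪u, v⟫_ℝ := by
  have hΘΘ : Θ (Θ v) = -v := by simpa using LinearMap.congr_fun h2 v
  rw [hskew, hΘΘ, inner_neg_right, neg_neg]

theorem jacobi_thetaCurvOp_apply (hskew : ∀ u v : V, ⟪Θ u, v⟫_ℝ = -⟪u, Θ v⟫_ℝ) (x y : V) :
    Jacobi (thetaCurvOp Θ) x y = (3 * ⟪Θ x, y⟫_ℝ) • Θ x := by
  have hyx : ⟪Θ y, x⟫_ℝ = -⟪Θ x, y⟫_ℝ := by rw [hskew, real_inner_comm]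
  simp only [Jacobi, thetaCurvOp, LinearMap.coe_mk, AddHom.coe_mk,
    inner_apply_self_eq_zero_of_skew hskew x, hyx, zero_smul]
  module

theorem jacobi_thetaCurvOp_comp_eq_zero (h2 : Θ ∘ₗ Θ = -LinearMap.id)
    (hskew : ∀ u v : V, ⟪Θ u, v⟫_ℝ = -⟪u, Θ v⟫_ℝ) {x y : V} (hxy : ⟪x, y⟫_ℝ = 0) :
    Jacobi (thetaCurvOp Θ) x ∘ₗ Jacobi (thetaCurvOp Θ) y = 0 := by
  ext z
  simp only [LinearMap.comp_apply, jacobi_thetaCurvOp_apply hskew, inner_smul_right,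
    inner_map_map_of_skew_of_sq_eq_neg_id h2 hskew, hxy, mul_zero, zero_smul,
    LinearMap.zero_apply]

end SkewEndomorphism

theorem stmt3 (Θ : V →ₗ[ℝ] V) (h2 : Θ ∘ₗ Θ = -LinearMap.id)
    (hskew : ∀ u v : V, ⟪Θ u, v⟫_ℝ = -⟪u, Θ v⟫_ℝ) :
    JacobiTsankov (thetaCurvOp Θ) := by
  intro x y hxy
  rw [jacobi_thetaCurvOp_comp_eq_zero h2 hskew hxy,
    jacobi_thetaCurvOp_comp_eq_zero h2 hskew (by rwa [real_inner_comm])]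
end
end

section
/- Let R be a Jacobi-Tsankov algebraic curvature tensor on V with dim V ≥ 3, and suppose that for some orthonormal basis {e_i}, R(e_i, e_j, e_j, e_k) = 0 for all distinct triples of indices i, j, k, and (if dim V ≥ 4) R(e_i, e_j, e_k, e_ℓ) = 0 for distinct i,j,k,ℓ. If additionally R(e_i(θ), e_k, e_k, e_j(θ)) = 0 for all rotated bases e_i(θ) = cos θ e_i + sin θ e_j, e_j(θ) = -sin θ e_i + cos θ e_j, then all sectional curvatures c_{ij} = R(e_i,e_j,e_j,e_i) are equal, i.e., R has constant sectional curvature. -/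
/-!
Rotating the pair `(e_i, e_j)` by `θ = π/4` turns the rotation hypothesis into
`(c_{jk} - c_{ik} + R_{ikkj} - R_{jkki}) / 2 = 0`, and the mixed terms vanish since
`R_{ijjk} = 0`; hence `c_{ik} = c_{jk}` for distinct `i, j, k`. Together with `c_{ij} = c_{ji}`
this makes all sectional curvatures a single constant `c`. Every component `R_{ijkl}` of a
curvature tensor in an orthonormal basis is then that of `c • R₀`: with two repeated indices it
is `± c` or `0` by the symmetries, with exactly one repeated index it reduces to some
`R_{ijjk} = 0`, and with four distinct indices it vanishes by hypothesis.
-/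

open scoped InnerProductSpace
noncomputable section

variable {V : Type*} [NormedAddCommGroup V] [InnerProductSpace ℝ V]

variable (V) in
def constCurvatureOperator : V →ₗ[ℝ] V →ₗ[ℝ] V →ₗ[ℝ] V :=
  LinearMap.mk₂ ℝ (fun x y => (innerₗ V y).smulRight x - (innerₗ V x).smulRight y)
    (fun _ _ _ => by ext; simp; module) (fun _ _ _ => by ext; simp; module)
    (fun _ _ _ => by ext; simp; module) (fun _ _ _ => by ext; simp; module)

theorem inner_constCurvatureOperator (x y z w : V) :
    ⟪constCurvatureOperator V x y z, w⟫_ℝ = ⟪y, z⟫_ℝ * ⟪x, w⟫_ℝ - ⟪x, z⟫_ℝ * ⟪y, w⟫_ℝ := by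
  simp [constCurvatureOperator, inner_sub_left, real_inner_smul_left]

theorem LinearMap.ext_basis_inner₃ {ι : Type*} (b : Module.Basis ι ℝ V)
    {R R' : V →ₗ[ℝ] V →ₗ[ℝ] V →ₗ[ℝ] V}
    (h : ∀ i j k l, ⟪R (b i) (b j) (b k), b l⟫_ℝ = ⟪R' (b i) (b j) (b k), b l⟫_ℝ) : R = R' :=
  LinearMap.ext_basis b b fun i j => b.ext fun k =>
    InnerProductSpace.ext_inner_right_basis b (h i j k)

theorem Fintype.four_le_card_of_ne {ι : Type*} [Fintype ι] {i j k l : ι} (hij : i ≠ j) (hik : i ≠ k)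
    (hil : i ≠ l) (hjk : j ≠ k) (hjl : j ≠ l) (hkl : k ≠ l) : 4 ≤ Fintype.card ι := by
  classical
  calc 4 = ({i, j, k, l} : Finset ι).card :=
        (Finset.card_eq_four.2 ⟨i, j, k, l, hij, hik, hil, hjk, hjl, hkl, rfl⟩).symm
    _ ≤ Fintype.card ι := Finset.card_le_univ _

theorem offDiag_eq_of_symm_of_eq_left {ι α : Type*} {S : ι → ι → α} (hs : ∀ i j, S i j = S j i)
    (h : ∀ i j k, i ≠ j → j ≠ k → i ≠ k → S i k = S j k) {p q r s : ι} (hpq : p ≠ q)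
    (hrs : r ≠ s) : S p q = S r s := by
  have move_right : ∀ {p q s}, p ≠ q → p ≠ s → S p q = S p s := fun {p q s} hpq hps => by
    rcases eq_or_ne q s with rfl | hqs
    · rfl
    · rw [hs p q, h q s p hqs hps.symm hpq.symm, hs]
  rcases eq_or_ne p r with rfl | hpr
  · exact move_right hpq hrs
  rcases eq_or_ne p s with rfl | hps
  · rw [move_right hpq hpr, hs]
  · rw [move_right hpq hps, h p r s hpr hrs hps]

theorem inner_apply_rotation_pi_div_four (R : V →ₗ[ℝ] V →ₗ[ℝ] V →ₗ[ℝ] V) (u v w : V) :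
    ⟪R (Real.cos (Real.pi / 4) • u + Real.sin (Real.pi / 4) • v) w w,
        -Real.sin (Real.pi / 4) • u + Real.cos (Real.pi / 4) • v⟫_ℝ =
      (⟪R v w w, v⟫_ℝ - ⟪R u w w, u⟫_ℝ + ⟪R u w w, v⟫_ℝ - ⟪R v w w, u⟫_ℝ) / 2 := by
  have hsqrt : √2 * √2 = 2 := Real.mul_self_sqrt zero_le_two
  simp only [Real.cos_pi_div_four, Real.sin_pi_div_four, map_add, map_smul, LinearMap.add_apply,
    LinearMap.smul_apply, inner_add_left, inner_add_right, real_inner_smul_left,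
    real_inner_smul_right]
  linear_combination (⟪R v w w, v⟫_ℝ - ⟪R u w w, u⟫_ℝ + ⟪R u w w, v⟫_ℝ - ⟪R v w w, u⟫_ℝ) / 4 * hsqrt

theorem IsCurvatureOperator.inner_antisymm_right {R : V →ₗ[ℝ] V →ₗ[ℝ] V →ₗ[ℝ] V}
    (hR : IsCurvatureOperator R) (x y z w : V) : ⟪R x y z, w⟫_ℝ = -⟪R x y w, z⟫_ℝ := by
  rw [hR.1 x y z w, hR.2.1 z w x y, hR.1 w z x y]

theorem IsCurvatureOperator.inner_basis_eq {R : V →ₗ[ℝ] V →ₗ[ℝ] V →ₗ[ℝ] V}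
    (hR : IsCurvatureOperator R) {ι : Type*} [Fintype ι] (b : OrthonormalBasis ι ℝ V) {c : ℝ}
    (hsec : ∀ i j, i ≠ j → ⟪R (b i) (b j) (b j), b i⟫_ℝ = c)
    (h_ijjk : ∀ i j k, i ≠ j → j ≠ k → i ≠ k → ⟪R (b i) (b j) (b j), b k⟫_ℝ = 0)
    (h_ijkl : ∀ i j k l, i ≠ j → i ≠ k → i ≠ l → j ≠ k → j ≠ l → k ≠ l →
      ⟪R (b i) (b j) (b k), b l⟫_ℝ = 0) (i j k l : ι) :
    ⟪R (b i) (b j) (b k), b l⟫_ℝ =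
      c * (⟪b j, b k⟫_ℝ * ⟪b i, b l⟫_ℝ - ⟪b i, b k⟫_ℝ * ⟪b j, b l⟫_ℝ) := by
  classical
  have hanti' := hR.inner_antisymm_right
  obtain ⟨hsym, hanti, -⟩ := hR
  simp only [orthonormal_iff_ite.mp b.orthonormal]
  rcases eq_or_ne i j with rfl | hij
  · rw [show ⟪R (b i) (b i) (b k), b l⟫_ℝ = 0 by linarith [hanti (b i) (b i) (b k) (b l)]]
    ring
  rcases eq_or_ne k l with rfl | hkl
  · rw [show ⟪R (b i) (b j) (b k), b k⟫_ℝ = 0 by linarith [hanti' (b i) (b j) (b k) (b k)]]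
    ring
  rcases eq_or_ne i l with rfl | hil
  · rcases eq_or_ne j k with rfl | hjk
    · simp [hsec i j hij, hij]
    · rw [hsym, h_ijjk k i j hkl hij hjk.symm]
      simp [hjk, hkl.symm]
  rcases eq_or_ne i k with rfl | hik
  · rcases eq_or_ne j l with rfl | hjl
    · simp [hanti (b i), hsec j i hij.symm, hij]
    · rw [hanti, h_ijjk j i l hij.symm hil hjl]
      simp [hij.symm, hjl]
  rcases eq_or_ne j k with rfl | hjk
  · rw [h_ijjk i j l hij hkl hil]
    simp [hil, hik]
  rcases eq_or_ne j l with rfl | hjl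
  · rw [hanti', h_ijjk i j k hij hjk hik]
    simp [hjk, hik]
  · rw [h_ijkl i j k l hij hik hil hjk hjl hkl]
    simp [hjk, hik]

theorem IsCurvatureOperator.eq_smul_constCurvatureOperator {R : V →ₗ[ℝ] V →ₗ[ℝ] V →ₗ[ℝ] V}
    (hR : IsCurvatureOperator R) {ι : Type*} [Fintype ι] (b : OrthonormalBasis ι ℝ V) {c : ℝ}
    (hsec : ∀ i j, i ≠ j → ⟪R (b i) (b j) (b j), b i⟫_ℝ = c)
    (h_ijjk : ∀ i j k, i ≠ j → j ≠ k → i ≠ k → ⟪R (b i) (b j) (b j), b k⟫_ℝ = 0)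
    (h_ijkl : ∀ i j k l, i ≠ j → i ≠ k → i ≠ l → j ≠ k → j ≠ l → k ≠ l →
      ⟪R (b i) (b j) (b k), b l⟫_ℝ = 0) :
    R = c • constCurvatureOperator V :=
  LinearMap.ext_basis_inner₃ b.toBasis fun i j k l => by
    simpa [inner_constCurvatureOperator, real_inner_smul_left] using
      hR.inner_basis_eq b hsec h_ijjk h_ijkl i j k l

theorem stmt8_general (hm : 3 ≤ Module.finrank ℝ V)
    (R : V →ₗ[ℝ] V →ₗ[ℝ] V →ₗ[ℝ] V) (hR : IsCurvatureOperator R)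
    (b : OrthonormalBasis (Fin (Module.finrank ℝ V)) ℝ V)
    (h1 : ∀ i j k, i ≠ j → j ≠ k → i ≠ k → ⟪R (b i) (b j) (b j), b k⟫_ℝ = 0)
    (h2 : 4 ≤ Module.finrank ℝ V → ∀ i j k l, i ≠ j → i ≠ k → i ≠ l → j ≠ k → j ≠ l →
      k ≠ l → ⟪R (b i) (b j) (b k), b l⟫_ℝ = 0)
    (h3 : ∀ (θ : ℝ) i j k, i ≠ j → j ≠ k → i ≠ k →
      ⟪R (Real.cos θ • b i + Real.sin θ • b j) (b k) (b k),
        -Real.sin θ • b i + Real.cos θ • b j⟫_ℝ = 0) :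
    ∃ c : ℝ, (∀ i j, i ≠ j → ⟪R (b i) (b j) (b j), b i⟫_ℝ = c) ∧
      ∀ x y z w : V, ⟪R x y z, w⟫_ℝ =
        c * (⟪y, z⟫_ℝ * ⟪x, w⟫_ℝ - ⟪x, z⟫_ℝ * ⟪y, w⟫_ℝ) := by
  have hsec_eq : ∀ i j k, i ≠ j → j ≠ k → i ≠ k →
      ⟪R (b i) (b k) (b k), b i⟫_ℝ = ⟪R (b j) (b k) (b k), b j⟫_ℝ := by
    intro i j k hij hjk hik
    have hrot := inner_apply_rotation_pi_div_four R (b i) (b j) (b k)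
    rw [h3 _ i j k hij hjk hik, h1 i k j hik hjk.symm hij, h1 j k i hjk hik.symm hij.symm] at hrot
    linarith
  let i₀ : Fin (Module.finrank ℝ V) := ⟨0, by omega⟩
  let i₁ : Fin (Module.finrank ℝ V) := ⟨1, by omega⟩
  obtain ⟨c, hsec⟩ : ∃ c, ∀ i j, i ≠ j → ⟪R (b i) (b j) (b j), b i⟫_ℝ = c :=
    ⟨_, fun i j hij => offDiag_eq_of_symm_of_eq_left (S := fun i j => ⟪R (b i) (b j) (b j), b i⟫_ℝ)
      (fun i j => hR.1 _ _ _ _) hsec_eq hij (show i₀ ≠ i₁ by simp [i₀, i₁, Fin.ext_iff])⟩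
  have h_ijkl := fun i j k l hij hik hil hjk hjl hkl =>
    h2 (by simpa using Fintype.four_le_card_of_ne hij hik hil hjk hjl hkl)
      i j k l hij hik hil hjk hjl hkl
  refine ⟨c, hsec, fun x y z w => ?_⟩
  rw [hR.eq_smul_constCurvatureOperator b hsec h1 h_ijkl]
  simp [inner_constCurvatureOperator, real_inner_smul_left]

theorem stmt8 [FiniteDimensional ℝ V] (hm : 3 ≤ Module.finrank ℝ V)
    (R : V →ₗ[ℝ] V →ₗ[ℝ] V →ₗ[ℝ] V) (hR : IsCurvatureOperator R)
    (hT : JacobiTsankov R)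
    (b : OrthonormalBasis (Fin (Module.finrank ℝ V)) ℝ V)
    (h1 : ∀ i j k, i ≠ j → j ≠ k → i ≠ k → ⟪R (b i) (b j) (b j), b k⟫_ℝ = 0)
    (h2 : 4 ≤ Module.finrank ℝ V → ∀ i j k l, i ≠ j → i ≠ k → i ≠ l → j ≠ k → j ≠ l →
      k ≠ l → ⟪R (b i) (b j) (b k), b l⟫_ℝ = 0)
    (h3 : ∀ (θ : ℝ) i j k, i ≠ j → j ≠ k → i ≠ k →
      ⟪R (Real.cos θ • b i + Real.sin θ • b j) (b k) (b k),
        -Real.sin θ • b i + Real.cos θ • b j⟫_ℝ = 0) :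
    ∃ c : ℝ, (∀ i j, i ≠ j → ⟪R (b i) (b j) (b j), b i⟫_ℝ = c) ∧
      ∀ x y z w : V, ⟪R x y z, w⟫_ℝ =
        c * (⟪y, z⟫_ℝ * ⟪x, w⟫_ℝ - ⟪x, z⟫_ℝ * ⟪y, w⟫_ℝ) :=
  stmt8_general hm R hR b h1 h2 h3
end
end

section
/- Let R be a Jacobi-Tsankov algebraic curvature tensor on V. If x ⊥ y are unit vectors with J(x)y = 0, then J(y)x = 0 and J(x)J(y) = 0. -/
/-!
Write `J` for the Jacobi operator. For orthonormal `q, e` the vectors `q + e` and `q - e` are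
orthogonal, so `J(q + e)` and `J(q - e)` commute; expanding both in `J(q)`, `J(e)` and the
polarization `J(q, e)` shows that `J(q) e = α e` forces `J(e) q = α q`. With `α = 0` this is the
first claim. For the second, `J(x)` and `J(y)` commute and are self-adjoint, so it suffices to
rule out a common unit eigenvector `f` with eigenvalues `α ≠ 0`, `γ ≠ 0`. Such an `f` is
orthogonal to `x` and `y` (both are killed by `J(x)`), hence `J(f) y = γ y`, and `J(x)` commutes
with `J(y, f)`. Since `J(y, f) f = -(γ/2) y`, applying `J(x)` gives `0 = -(α γ / 2) y`.
-/

open scoped InnerProductSpace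
noncomputable section

variable {V : Type*} [NormedAddCommGroup V] [InnerProductSpace ℝ V]

theorem LinearMap.IsSymmetric.comp_eq_zero_of_commute {𝕜 E : Type*} [RCLike 𝕜]
    [NormedAddCommGroup E] [InnerProductSpace 𝕜 E] [FiniteDimensional 𝕜 E] {A B : E →ₗ[𝕜] E}
    (hA : A.IsSymmetric) (hB : B.IsSymmetric) (hAB : Commute A B)
    (h : ∀ (α γ : 𝕜) (v : E), v ≠ 0 → A v = α • v → B v = γ • v → α = 0 ∨ γ = 0) :
    A ∘ₗ B = 0 := by
  refine LinearMap.ker_eq_top.mp (top_le_iff.mp ?_)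
  rw [← hA.iSup_iSup_eigenspace_inf_eigenspace_eq_top_of_commute hB hAB]
  refine iSup_le fun α => iSup_le fun γ => fun v hv => ?_
  obtain ⟨hAv, hBv⟩ := Submodule.mem_inf.mp hv
  rw [Module.End.mem_eigenspace_iff] at hAv hBv
  rw [LinearMap.mem_ker, LinearMap.comp_apply, hBv, map_smul, hAv, smul_smul]
  rcases eq_or_ne v 0 with rfl | hv0
  · exact smul_zero _
  · rcases h α γ v hv0 hAv hBv with rfl | rfl <;> simp

theorem eq_smul_of_inner_self_eq_sq {u q : V} {α : ℝ} (hq : ‖q‖ = 1) (huu : ⟪u, u⟫_ℝ = α ^ 2)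
    (huq : ⟪u, q⟫_ℝ = α) : u = α • q := by
  rw [← sub_eq_zero, ← norm_eq_zero, ← sq_eq_zero_iff, norm_sub_sq_real, real_inner_smul_right,
    norm_smul, ← real_inner_self_eq_norm_sq, huu, huq, hq, Real.norm_eq_abs, mul_one, sq_abs]
  ring

variable {R : V →ₗ[ℝ] V →ₗ[ℝ] V →ₗ[ℝ] V}

@[simp]
theorem jacobi_apply (a z : V) : Jacobi R a z = R z a a := rfl

@[simp]
theorem jacobiP_apply (a b z : V) :
    JacobiP R a b z = (1 / 2 : ℝ) • R z a b + (1 / 2 : ℝ) • R z b a := rfl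

theorem jacobi_add (a b : V) :
    Jacobi R (a + b) = Jacobi R a + Jacobi R b + (2 : ℝ) • JacobiP R a b := by
  ext z
  simp only [jacobi_apply, jacobiP_apply, map_add, LinearMap.add_apply, LinearMap.smul_apply]
  module

theorem jacobi_sub (a b : V) :
    Jacobi R (a - b) = Jacobi R a + Jacobi R b - (2 : ℝ) • JacobiP R a b := by
  ext z
  simp only [jacobi_apply, jacobiP_apply, map_sub, LinearMap.add_apply, LinearMap.sub_apply,
    LinearMap.smul_apply]
  module

theorem jacobiP_eq (a b : V) :
    JacobiP R a b = (1 / 2 : ℝ) • (Jacobi R (a + b) - Jacobi R a - Jacobi R b) := by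
  rw [jacobi_add]
  module

namespace IsCurvatureOperator

variable (hR : IsCurvatureOperator R)
include hR

theorem inner_apply_swap_right (a b c d : V) : ⟪R a b c, d⟫_ℝ = -⟪R a b d, c⟫_ℝ := by
  rw [hR.1 a b c d, hR.2.1 c d a b, hR.1 d c a b]

theorem apply_swap_left (a b c : V) : R a b c = -R b a c :=
  ext_inner_right ℝ fun w => by rw [inner_neg_left, hR.2.1]

theorem apply_self_left (a b : V) : R a a b = 0 :=
  ext_inner_right ℝ fun w => by linarith [hR.2.1 a a b w, inner_zero_left (𝕜 := ℝ) w]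

theorem jacobi_apply_self (a : V) : Jacobi R a a = 0 :=
  hR.apply_self_left a a

theorem isSymmetric_jacobi (a : V) : (Jacobi R a).IsSymmetric := fun z w => by
  rw [jacobi_apply, jacobi_apply, hR.1 z a a w, hR.2.1 a w z a, hR.inner_apply_swap_right w a z a,
    neg_neg, real_inner_comm]

theorem isSymmetric_jacobiP (a b : V) : (JacobiP R a b).IsSymmetric := by
  rw [jacobiP_eq]
  exact (((hR.isSymmetric_jacobi _).sub (hR.isSymmetric_jacobi a)).sub
    (hR.isSymmetric_jacobi b)).smul (conj_trivial _)

theorem jacobiP_apply_left (a b : V) : JacobiP R a b a = -(1 / 2 : ℝ) • Jacobi R a b := by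
  rw [jacobiP_apply, jacobi_apply, hR.apply_self_left, hR.apply_swap_left a b a]
  module

theorem jacobiP_apply_right (a b : V) : JacobiP R a b b = -(1 / 2 : ℝ) • Jacobi R b a := by
  rw [jacobiP_apply, jacobi_apply, hR.apply_self_left, hR.apply_swap_left b a b]
  module

end IsCurvatureOperator

namespace JacobiTsankov

variable (hT : JacobiTsankov R)
include hT

theorem commute {x y : V} (hxy : ⟪x, y⟫_ℝ = 0) : Commute (Jacobi R x) (Jacobi R y) :=
  hT x y hxy

theorem commute_jacobiP {x y z : V} (hxy : ⟪x, y⟫_ℝ = 0) (hxz : ⟪x, z⟫_ℝ = 0) :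
    Commute (Jacobi R x) (JacobiP R y z) := by
  have hx_yz : ⟪x, y + z⟫_ℝ = 0 := by rw [inner_add_right, hxy, hxz, add_zero]
  rw [jacobiP_eq]
  exact (((hT.commute hx_yz).sub_right (hT.commute hxy)).sub_right (hT.commute hxz)).smul_right _

theorem jacobi_apply_eq_smul_of_jacobi_apply_eq_smul (hR : IsCurvatureOperator R) {q e : V}
    (hq : ‖q‖ = 1) (he : ‖e‖ = 1) (hqe : ⟪q, e⟫_ℝ = 0) {α : ℝ} (h : Jacobi R q e = α • e) :
    Jacobi R e q = α • q := by
  obtain ⟨u, hu⟩ : ∃ u, Jacobi R e q = u := ⟨_, rfl⟩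
  have hPq : JacobiP R q e q = -(α / 2) • e := by
    rw [hR.jacobiP_apply_left, h, smul_smul]
    ring_nf
  have hPe : JacobiP R q e e = -(1 / 2 : ℝ) • u := by rw [hR.jacobiP_apply_right, hu]
  have horth : ⟪q + e, q - e⟫_ℝ = 0 := by
    rw [inner_add_left, inner_sub_right, inner_sub_right, real_inner_comm q e, hqe,
      real_inner_self_eq_norm_sq, real_inner_self_eq_norm_sq, hq, he]
    ring
  have hcomm := LinearMap.congr_fun (hT (q + e) (q - e) horth) q
  simp only [LinearMap.comp_apply, jacobi_add, jacobi_sub, LinearMap.add_apply,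
    LinearMap.sub_apply, LinearMap.smul_apply, map_add, map_sub, map_smul,
    map_zero, add_zero, hR.jacobi_apply_self, hPq, hPe, h, hu] at hcomm
  -- `J(q + e)` and `J(q - e)` commute at `q`, which reads `4 J(q, e) u = -2 α² e`.
  have hPu : JacobiP R q e u = -(α ^ 2 / 2) • e := by
    linear_combination (norm := module) (1 / 4 : ℝ) • hcomm
  have huu : ⟪u, u⟫_ℝ = α ^ 2 := by
    have := hR.isSymmetric_jacobiP q e u e
    rw [hPu, hPe, real_inner_smul_left, real_inner_smul_right, real_inner_self_eq_norm_sq e,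
      he] at this
    linarith
  have huq : ⟪u, q⟫_ℝ = α := by
    rw [← hu, jacobi_apply, hR.1, ← jacobi_apply, h, real_inner_smul_left,
      real_inner_self_eq_norm_sq, he]
    ring
  rw [hu]
  exact eq_smul_of_inner_self_eq_sq hq huu huq

theorem eq_zero_or_eq_zero_of_jacobi_apply_eq_smul (hR : IsCurvatureOperator R) {x y f : V}
    (hy : ‖y‖ = 1) (hxy : ⟪x, y⟫_ℝ = 0) (h0 : Jacobi R x y = 0) (hf : f ≠ 0) {α γ : ℝ}
    (hxf : Jacobi R x f = α • f) (hyf : Jacobi R y f = γ • f) : α = 0 ∨ γ = 0 := by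
  by_contra! ⟨hα, hγ⟩
  have inner_eq_zero_of_mem_ker : ∀ w, Jacobi R x w = 0 → ⟪f, w⟫_ℝ = 0 := fun w hw => by
    have : α * ⟪f, w⟫_ℝ = 0 := by
      rw [← real_inner_smul_left, ← hxf, hR.isSymmetric_jacobi x, hw, inner_zero_right]
    exact (mul_eq_zero.mp this).resolve_left hα
  set f₁ := ‖f‖⁻¹ • f
  have hf₁ : ‖f₁‖ = 1 := norm_smul_inv_norm hf
  have hxf₁ : Jacobi R x f₁ = α • f₁ := by rw [map_smul, hxf, smul_comm]
  have hyf₁ : Jacobi R y f₁ = γ • f₁ := by rw [map_smul, hyf, smul_comm]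
  have hx_f₁ : ⟪x, f₁⟫_ℝ = 0 := by
    rw [real_inner_smul_right, real_inner_comm,
      inner_eq_zero_of_mem_ker x (hR.jacobi_apply_self x), mul_zero]
  have hy_f₁ : ⟪y, f₁⟫_ℝ = 0 := by
    rw [real_inner_smul_right, real_inner_comm, inner_eq_zero_of_mem_ker y h0, mul_zero]
  have hf₁y : Jacobi R f₁ y = γ • y :=
    hT.jacobi_apply_eq_smul_of_jacobi_apply_eq_smul hR hy hf₁ hy_f₁ hyf₁
  have hPf₁ : JacobiP R y f₁ f₁ = -(γ / 2) • y := by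
    rw [hR.jacobiP_apply_right, hf₁y, smul_smul]
    ring_nf
  have key := LinearMap.congr_fun (hT.commute_jacobiP hxy hx_f₁).eq f₁
  simp only [Module.End.mul_apply, hxf₁, map_smul, hPf₁, h0, smul_zero] at key
  have hαγ : (α * γ) • y = 0 := by linear_combination (norm := module) (2 : ℝ) • key
  exact (smul_ne_zero (mul_ne_zero hα hγ) (norm_ne_zero_iff.mp (hy ▸ one_ne_zero))) hαγ

end JacobiTsankov

theorem stmt10_general [FiniteDimensional ℝ V]
    (R : V →ₗ[ℝ] V →ₗ[ℝ] V →ₗ[ℝ] V) (hR : IsCurvatureOperator R)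
    (hT : JacobiTsankov R) (x y : V) (hx : ‖x‖ = 1) (hy : ‖y‖ = 1)
    (hxy : ⟪x, y⟫_ℝ = 0) (h0 : Jacobi R x y = 0) :
    Jacobi R y x = 0 ∧ Jacobi R x ∘ₗ Jacobi R y = 0 := by
  refine ⟨?_, ?_⟩
  · simpa using hT.jacobi_apply_eq_smul_of_jacobi_apply_eq_smul hR hx hy hxy (α := 0)
      (by rw [h0, zero_smul])
  · exact (hR.isSymmetric_jacobi x).comp_eq_zero_of_commute (hR.isSymmetric_jacobi y)
      (hT.commute hxy) fun α γ f hf hxf hyf =>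
        hT.eq_zero_or_eq_zero_of_jacobi_apply_eq_smul hR hy hxy h0 hf hxf hyf

theorem stmt10 [FiniteDimensional ℝ V] (hm : 3 ≤ Module.finrank ℝ V)
    (R : V →ₗ[ℝ] V →ₗ[ℝ] V →ₗ[ℝ] V) (hR : IsCurvatureOperator R)
    (hT : JacobiTsankov R) (x y : V) (hx : ‖x‖ = 1) (hy : ‖y‖ = 1)
    (hxy : ⟪x, y⟫_ℝ = 0) (h0 : Jacobi R x y = 0) :
    Jacobi R y x = 0 ∧ Jacobi R x ∘ₗ Jacobi R y = 0 :=
  stmt10_general R hR hT x y hx hy hxy h0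
end
end

section
/- Let R be a Jacobi-Tsankov algebraic curvature tensor and {x, z₁, z₂} an orthonormal set with J(x)z₁ = λ₁z₁ and J(x)z₂ = λ₂z₂ where λ₁ ≠ λ₂. Then J(z₁)z₂ = 0. -/
/-!
Put `e = z₂ + s • z₁`. It is orthogonal to `x`, so `J(e)` commutes with `J(x)`, and `J(e) e = 0`.
Hence `J(e)` also kills `J(x) e = λ₂ z₂ + s λ₁ z₁`, and since `λ₁ ≠ λ₂` it kills `z₂`. Expanding,
`0 = J(e) z₂ = s R(z₂,z₁)z₂ + s² R(z₂,z₁)z₁` for every `s`; taking `s = ±1` gives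
`J(z₁) z₂ = R(z₂,z₁)z₁ = 0`.
-/

open scoped InnerProductSpace
noncomputable section

variable {V : Type*} [NormedAddCommGroup V] [InnerProductSpace ℝ V]

theorem Module.End.apply_eq_zero_of_commute_of_apply_add_eq_zero {K M : Type*} [Field K]
    [AddCommGroup M] [Module K M] {A B : Module.End K M} (hAB : Commute A B) {u w : M} {a b : K}
    (hu : A u = a • u) (hw : A w = b • w) (hab : a ≠ b) (hB : B (u + w) = 0) : B u = 0 := by
  have hBAv : a • B u + b • B w = 0 := by
    rw [← map_smul, ← map_smul, ← map_add, ← hu, ← hw, ← map_add, ← Module.End.mul_apply,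
      ← hAB.eq, Module.End.mul_apply, hB, map_zero]
  have hBw : B w = -B u := eq_neg_of_add_eq_zero_right (by rwa [← map_add])
  rw [hBw, smul_neg, ← sub_eq_add_neg, ← sub_smul] at hBAv
  exact (smul_eq_zero.mp hBAv).resolve_left (sub_ne_zero.mpr hab)

namespace IsCurvatureOperator

variable {R : V →ₗ[ℝ] V →ₗ[ℝ] V →ₗ[ℝ] V}

theorem apply_self (hR : IsCurvatureOperator R) (a z : V) : R a a z = 0 :=
  ext_inner_right ℝ fun w => by
    have h := hR.2.1 a a z w
    rw [inner_zero_left]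
    linarith

theorem jacobi_self (hR : IsCurvatureOperator R) (a : V) : Jacobi R a a = 0 :=
  hR.apply_self a a

theorem jacobi_add_smul_apply (hR : IsCurvatureOperator R) (y z : V) (s : ℝ) :
    Jacobi R (y + s • z) y = s • R y z y + (s * s) • R y z z := by
  change R y (y + s • z) (y + s • z) = _
  simp only [map_add, map_smul, LinearMap.add_apply, LinearMap.smul_apply, hR.apply_self]
  module

theorem jacobi_apply_eq_zero_of_forall_jacobi_add_smul (hR : IsCurvatureOperator R) {y z : V}
    (h : ∀ s : ℝ, Jacobi R (y + s • z) y = 0) : Jacobi R z y = 0 := by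
  have hplus := h 1
  have hminus := h (-1)
  rw [hR.jacobi_add_smul_apply] at hplus hminus
  have htwice : (2 : ℝ) • R y z z = 0 :=
    calc (2 : ℝ) • R y z z
        = ((1 : ℝ) • R y z y + ((1 : ℝ) * 1) • R y z z)
          + ((-1 : ℝ) • R y z y + ((-1 : ℝ) * -1) • R y z z) := by module
      _ = 0 := by rw [hplus, hminus, add_zero]
  exact (smul_eq_zero.mp htwice).resolve_left two_ne_zero

end IsCurvatureOperator

theorem stmt12_general
    (R : V →ₗ[ℝ] V →ₗ[ℝ] V →ₗ[ℝ] V) (hR : IsCurvatureOperator R)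
    (hT : JacobiTsankov R) (x z₁ z₂ : V)
    (hxz1 : ⟪x, z₁⟫_ℝ = 0) (hxz2 : ⟪x, z₂⟫_ℝ = 0)
    (lam₁ lam₂ : ℝ) (h1 : Jacobi R x z₁ = lam₁ • z₁) (h2 : Jacobi R x z₂ = lam₂ • z₂)
    (hne : lam₁ ≠ lam₂) :
    Jacobi R z₁ z₂ = 0 := by
  refine hR.jacobi_apply_eq_zero_of_forall_jacobi_add_smul fun s => ?_
  have hxe : ⟪x, z₂ + s • z₁⟫_ℝ = 0 := by
    rw [inner_add_right, inner_smul_right, hxz1, hxz2, mul_zero, add_zero]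
  have hsz₁ : Jacobi R x (s • z₁) = lam₁ • s • z₁ := by rw [map_smul, h1, smul_comm]
  exact Module.End.apply_eq_zero_of_commute_of_apply_add_eq_zero (hT x _ hxe) h2 hsz₁
    hne.symm (hR.jacobi_self _)

theorem stmt12 [FiniteDimensional ℝ V] (hm : 3 ≤ Module.finrank ℝ V)
    (R : V →ₗ[ℝ] V →ₗ[ℝ] V →ₗ[ℝ] V) (hR : IsCurvatureOperator R)
    (hT : JacobiTsankov R) (x z₁ z₂ : V)
    (hx : ‖x‖ = 1) (hz1 : ‖z₁‖ = 1) (hz2 : ‖z₂‖ = 1)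
    (hxz1 : ⟪x, z₁⟫_ℝ = 0) (hxz2 : ⟪x, z₂⟫_ℝ = 0) (hz12 : ⟪z₁, z₂⟫_ℝ = 0)
    (lam₁ lam₂ : ℝ) (h1 : Jacobi R x z₁ = lam₁ • z₁) (h2 : Jacobi R x z₂ = lam₂ • z₂)
    (hne : lam₁ ≠ lam₂) :
    Jacobi R z₁ z₂ = 0 :=
  stmt12_general R hR hT x z₁ z₂ hxz1 hxz2 lam₁ lam₂ h1 h2 hne
end
end

section
/- Let R ≠ 0 be a Jacobi-Tsankov algebraic curvature tensor on V of dimension m ≥ 3. If r(x) = m-1 for some unit vector x, then R has constant sectional curvature c ≠ 0. -/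
open scoped InnerProductSpace
noncomputable section

variable {V : Type*} [NormedAddCommGroup V] [InnerProductSpace ℝ V]

namespace Stmt14Aux

variable {R : V →ₗ[ℝ] V →ₗ[ℝ] V →ₗ[ℝ] V}

lemma jac_apply (R : V →ₗ[ℝ] V →ₗ[ℝ] V →ₗ[ℝ] V) (x y : V) :
    Jacobi R x y = R y x x := rfl

lemma ext0 {v : V} (h : ∀ w, ⟪v, w⟫_ℝ = 0) : v = 0 :=
  inner_self_eq_zero.mp (h v)

variable (hR : IsCurvatureOperator R)
include hR

lemma pair (a b c d : V) : ⟪R a b c, d⟫_ℝ = ⟪R c d a, b⟫_ℝ := hR.1 a b c d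

lemma anti12 (a b c d : V) : ⟪R a b c, d⟫_ℝ = - ⟪R b a c, d⟫_ℝ := hR.2.1 a b c d

lemma anti34 (a b c d : V) : ⟪R a b c, d⟫_ℝ = - ⟪R a b d, c⟫_ℝ := by
  rw [pair hR a b c d, anti12 hR c d a b, ← pair hR a b d c]

lemma R_diag (a c : V) : R a a c = 0 := by
  refine ext0 fun w => ?_
  have := anti12 hR a a c w
  linarith

lemma R_swap (a b c : V) : R a b c = - R b a c := by
  have h : R a b c + R b a c = 0 := by
    refine ext0 fun w => ?_
    rw [inner_add_left]
    have := anti12 hR a b c w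
    linarith
  exact eq_neg_of_add_eq_zero_left h

lemma bianchi_vec (a b c : V) : R a b c + R b c a + R c a b = 0 := by
  refine ext0 fun w => ?_
  rw [inner_add_left, inner_add_left]
  exact hR.2.2 a b c w

lemma diag_sym (a b c : V) : ⟪R a b c, a⟫_ℝ = ⟪R a c b, a⟫_ℝ := by
  have hb := hR.2.2 a b c a
  have h2 : ⟪R b c a, a⟫_ℝ = 0 := by
    have := anti34 hR b c a a; linarith
  have h3 := anti12 hR c a b a
  linarith

lemma jac_symm (y u v : V) : ⟪R u y y, v⟫_ℝ = ⟪R v y y, u⟫_ℝ := by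
  rw [pair hR u y y v, pair hR v y y u]
  exact diag_sym hR y v u

end Stmt14Aux

open Stmt14Aux

set_option maxHeartbeats 2000000 in
theorem stmt14 [FiniteDimensional ℝ V] (hm : 3 ≤ Module.finrank ℝ V)
    (R : V →ₗ[ℝ] V →ₗ[ℝ] V →ₗ[ℝ] V) (hR : IsCurvatureOperator R)
    (hT : JacobiTsankov R) (hne : R ≠ 0)
    (x : V) (hx : ‖x‖ = 1)
    (hrank : Module.finrank ℝ (LinearMap.range (Jacobi R x)) = Module.finrank ℝ V - 1) :
    ∃ c : ℝ, c ≠ 0 ∧ ∀ x y z : V, R x y z = c • (⟪y, z⟫_ℝ • x - ⟪x, z⟫_ℝ • y) := by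
  have hx0 : x ≠ 0 := by
    intro h; rw [h, norm_zero] at hx; norm_num at hx
  have hxx : ⟪x, x⟫_ℝ = 1 := by
    rw [real_inner_self_eq_norm_sq, hx]; norm_num
  -- kernel of J(x) is the span of x
  have hker : LinearMap.ker (Jacobi R x) = Submodule.span ℝ {x} := by
    have hle : Submodule.span ℝ {x} ≤ LinearMap.ker (Jacobi R x) := by
      rw [Submodule.span_singleton_le_iff_mem, LinearMap.mem_ker, jac_apply]
      exact R_diag hR x x
    have h1 := LinearMap.finrank_range_add_finrank_ker (Jacobi R x)
    have hs : Module.finrank ℝ (Submodule.span ℝ {x}) = 1 := finrank_span_singleton hx0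
    refine (Submodule.eq_of_le_of_finrank_le hle ?_).symm
    rw [hs]; omega
  -- the *-identity : J(y)x is a multiple of x for y ⊥ x
  have hstar : ∀ y : V, ⟪x, y⟫_ℝ = 0 → R x y y = ⟪R y x x, y⟫_ℝ • x := by
    intro y hy
    have hc := hT x y hy
    have h1 : Jacobi R x (Jacobi R y x) = 0 := by
      have h2 := DFunLike.congr_fun hc x
      simp only [LinearMap.comp_apply] at h2
      rw [h2]
      have h3 : Jacobi R x x = 0 := R_diag hR x x
      rw [h3, map_zero]
    have h2 : Jacobi R y x ∈ LinearMap.ker (Jacobi R x) := LinearMap.mem_ker.mpr h1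
    rw [hker] at h2
    obtain ⟨t, ht⟩ := Submodule.mem_span_singleton.mp h2
    have h3 : ⟪Jacobi R y x, x⟫_ℝ = t := by
      rw [← ht, real_inner_smul_left, hxx]; ring
    have h4 : ⟪R x y y, x⟫_ℝ = ⟪R y x x, y⟫_ℝ := pair hR x y y x
    rw [jac_apply] at ht h3
    rw [← h4, h3, ht]
  -- the H-identity
  have hH : ∀ y w : V, ⟪x, y⟫_ℝ = 0 → ⟪x, w⟫_ℝ = 0 → ⟪y, w⟫_ℝ = 0 →
      Jacobi R y (Jacobi R x w) = ⟪R y x x, y⟫_ℝ • Jacobi R x w := by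
    intro y w hy hw hyw
    set P := Jacobi R (x + w) - Jacobi R x - Jacobi R w with hP
    have hwy : ⟪w, y⟫_ℝ = 0 := by rw [real_inner_comm]; exact hyw
    have hxwy : ⟪x + w, y⟫_ℝ = 0 := by rw [inner_add_left, hy, hwy]; ring
    have hcomm : P ∘ₗ Jacobi R y = Jacobi R y ∘ₗ P := by
      simp only [hP, LinearMap.sub_comp, LinearMap.comp_sub,
        hT x y hy, hT w y hwy, hT (x + w) y hxwy]
    have hPx : P x = - R w x x := by
      simp only [hP, LinearMap.sub_apply, jac_apply]
      have e : R x (x + w) (x + w) = R x x x + R x x w + R x w x + R x w w := by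
        simp only [map_add, LinearMap.add_apply]; abel
      rw [e, R_diag hR x x, R_diag hR x w, R_swap hR x w x]
      abel
    have h5 := DFunLike.congr_fun hcomm x
    simp only [LinearMap.comp_apply] at h5
    have h6 : Jacobi R y x = ⟪R y x x, y⟫_ℝ • x := by
      rw [jac_apply]; exact hstar y hy
    rw [h6, map_smul, hPx, map_neg, smul_neg] at h5
    have h7 : Jacobi R y (R w x x) = ⟪R y x x, y⟫_ℝ • R w x x := (neg_inj.mp h5).symm
    rw [jac_apply R x w]
    exact h7
  -- scalar consequence
  have hscal : ∀ y w : V, ⟪x, y⟫_ℝ = 0 → ⟪x, w⟫_ℝ = 0 → ⟪y, w⟫_ℝ = 0 →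
      ⟪R y x x, y⟫_ℝ * ⟪R w x x, y⟫_ℝ = 0 := by
    intro y w hy hw hyw
    have h := hH y w hy hw hyw
    have h2 := congrArg (fun v => ⟪v, y⟫_ℝ) h
    simp only [real_inner_smul_left, jac_apply] at h2
    have h3 : ⟪R (R w x x) y y, y⟫_ℝ = 0 := by
      rw [jac_symm hR y (R w x x) y, R_diag hR y y, inner_zero_left]
    rw [h3] at h2
    linarith [h2]
  -- T = J(x) kills off-diagonal terms on x-perp
  have hT0 : ∀ y w : V, ⟪x, y⟫_ℝ = 0 → ⟪x, w⟫_ℝ = 0 → ⟪y, w⟫_ℝ = 0 →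
      ⟪R w x x, y⟫_ℝ = 0 := by
    have main : ∀ u v : V, ⟪x, u⟫_ℝ = 0 → ⟪x, v⟫_ℝ = 0 → ⟪u, v⟫_ℝ = 0 →
        ⟪u, u⟫_ℝ = ⟪v, v⟫_ℝ → ⟪R v x x, u⟫_ℝ = 0 := by
      intro u v hu hv huv hn
      have hS' : ⟪R u x x, v⟫_ℝ = ⟪R v x x, u⟫_ℝ := jac_symm hR x u v
      have key : ∀ α β : ℝ,
          (α^2 * ⟪R u x x, u⟫_ℝ + 2*α*β*⟪R v x x, u⟫_ℝ + β^2 * ⟪R v x x, v⟫_ℝ) *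
          (α*β*(⟪R v x x, v⟫_ℝ - ⟪R u x x, u⟫_ℝ) + (α^2 - β^2) * ⟪R v x x, u⟫_ℝ) = 0 := by
        intro α β
        have hvu : ⟪v, u⟫_ℝ = 0 := by rw [real_inner_comm]; exact huv
        have h1 : ⟪x, α • u + β • v⟫_ℝ = 0 := by
          simp [inner_add_right, real_inner_smul_right, hu, hv]
        have h2 : ⟪x, α • v - β • u⟫_ℝ = 0 := by
          simp [inner_sub_right, real_inner_smul_right, hu, hv]
        have h3 : ⟪α • u + β • v, α • v - β • u⟫_ℝ = 0 := by
          simp only [inner_add_left, inner_sub_right, real_inner_smul_left,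
            real_inner_smul_right, huv, hvu]
          rw [hn]; ring
        have h := hscal (α • u + β • v) (α • v - β • u) h1 h2 h3
        simp only [map_add, map_sub, map_smul, LinearMap.add_apply, LinearMap.sub_apply,
          LinearMap.smul_apply, inner_add_left, inner_sub_left, inner_add_right,
          inner_sub_right, real_inner_smul_left, real_inner_smul_right] at h
        rw [hS'] at h
        linear_combination h
      by_contra hS0
      have k10 : ⟪R u x x, u⟫_ℝ * ⟪R v x x, u⟫_ℝ = 0 := by linear_combination key 1 0
      have k01 : ⟪R v x x, v⟫_ℝ * ⟪R v x x, u⟫_ℝ = 0 := by linear_combination (-1 : ℝ) * key 0 1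
      have hA : ⟪R u x x, u⟫_ℝ = 0 := by
        rcases mul_eq_zero.mp k10 with h | h
        · exact h
        · exact absurd h hS0
      have hB : ⟪R v x x, v⟫_ℝ = 0 := by
        rcases mul_eq_zero.mp k01 with h | h
        · exact h
        · exact absurd h hS0
      have h12 : (12:ℝ) * ⟪R v x x, u⟫_ℝ^2 = 0 := by
        linear_combination key 2 1 - (6*⟪R v x x, v⟫_ℝ - 8*⟪R u x x, u⟫_ℝ + 4*⟪R v x x, u⟫_ℝ) * hA
          - (11*⟪R v x x, u⟫_ℝ + 2*⟪R v x x, v⟫_ℝ) * hB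
      have : ⟪R v x x, u⟫_ℝ = 0 := by
        have h2 : ⟪R v x x, u⟫_ℝ^2 = 0 := by linarith
        exact pow_eq_zero_iff (by norm_num) |>.mp h2
      exact hS0 this
    intro y w hy hw hyw
    by_cases hy0 : y = 0
    · rw [hy0, inner_zero_right]
    by_cases hw0 : w = 0
    · rw [hw0]; simp
    have hwy : ⟪w, y⟫_ℝ = 0 := by rw [real_inner_comm]; exact hyw
    have h := main (‖w‖ • y) (‖y‖ • w)
      (by rw [real_inner_smul_right, hy, mul_zero])
      (by rw [real_inner_smul_right, hw, mul_zero])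
      (by rw [real_inner_smul_left, real_inner_smul_right, hyw]; ring)
      (by rw [real_inner_smul_left, real_inner_smul_right, real_inner_smul_left,
              real_inner_smul_right, real_inner_self_eq_norm_sq, real_inner_self_eq_norm_sq]; ring)
    rw [map_smul, LinearMap.smul_apply, LinearMap.smul_apply, real_inner_smul_left,
      real_inner_smul_right] at h
    have hny : ‖y‖ ≠ 0 := norm_ne_zero_iff.mpr hy0
    have hnw : ‖w‖ ≠ 0 := norm_ne_zero_iff.mpr hw0
    rcases mul_eq_zero.mp h with ha | ha
    · exact absurd ha hny
    rcases mul_eq_zero.mp ha with hb | hb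
    · exact absurd hb hnw
    exact hb
  -- J(x) is multiplication by a constant c on x-perp
  obtain ⟨c, hc0, hJx⟩ : ∃ c : ℝ, c ≠ 0 ∧ ∀ y : V, ⟪x, y⟫_ℝ = 0 → R y x x = c • y := by
    -- each y ⊥ x is an eigenvector of J(x)
    have hperp : ∀ y : V, ⟪x, y⟫_ℝ = 0 → ∃ t : ℝ, R y x x = t • y := by
      intro y hy
      by_cases hy0 : y = 0
      · exact ⟨0, by rw [hy0]; simp⟩
      have hyy : ⟪y, y⟫_ℝ ≠ 0 := inner_self_ne_zero.mpr hy0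
      refine ⟨⟪R y x x, y⟫_ℝ / ⟪y, y⟫_ℝ, ?_⟩
      apply ext_inner_right ℝ
      intro v
      set a := ⟪x, v⟫_ℝ with ha
      set b := ⟪y, v⟫_ℝ / ⟪y, y⟫_ℝ with hb
      set w0 := v - a • x - b • y with hw0
      have hyx : ⟪y, x⟫_ℝ = 0 := by rw [real_inner_comm]; exact hy
      have hv : v = a • x + b • y + w0 := by rw [hw0]; abel
      have hw0x : ⟪x, w0⟫_ℝ = 0 := by
        rw [hw0, inner_sub_right, inner_sub_right, real_inner_smul_right,
          real_inner_smul_right, hxx, hy]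
        ring
      have hw0y : ⟪y, w0⟫_ℝ = 0 := by
        rw [hw0, inner_sub_right, inner_sub_right, real_inner_smul_right,
          real_inner_smul_right, hyx, hb]
        field_simp
        ring
      have hRx : ⟪R y x x, x⟫_ℝ = 0 := by
        have := anti34 hR y x x x; linarith
      have hRw0 : ⟪R y x x, w0⟫_ℝ = 0 := by
        rw [jac_symm hR x y w0]
        exact hT0 y w0 hy hw0x hw0y
      conv_lhs => rw [hv]
      rw [inner_add_right, inner_add_right, real_inner_smul_right, real_inner_smul_right,
        hRx, hRw0, real_inner_smul_left]
      conv_rhs => rw [hv]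
      rw [inner_add_right, inner_add_right, real_inner_smul_right, real_inner_smul_right,
        hyx, hw0y, hb]
      field_simp
      ring
    -- choose a nonzero vector orthogonal to x
    obtain ⟨y0, hy0x, hy00⟩ : ∃ y0 : V, ⟪x, y0⟫_ℝ = 0 ∧ y0 ≠ 0 := by
      have hne_top : Submodule.span ℝ {x} ≠ ⊤ := by
        intro h
        have h1 : Module.finrank ℝ (Submodule.span ℝ {x}) = 1 := finrank_span_singleton hx0
        rw [h, finrank_top] at h1
        omega
      obtain ⟨v, hv⟩ : ∃ v : V, v ∉ Submodule.span ℝ {x} := by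
        by_contra hcon
        push_neg at hcon
        exact hne_top (Submodule.eq_top_iff'.mpr hcon)
      refine ⟨v - ⟪x, v⟫_ℝ • x, ?_, ?_⟩
      · rw [inner_sub_right, real_inner_smul_right, hxx]; ring
      · intro h0
        apply hv
        rw [sub_eq_zero.mp h0]
        exact Submodule.smul_mem _ _ (Submodule.mem_span_singleton_self x)
    obtain ⟨c, hcy0⟩ := hperp y0 hy0x
    have huniq : ∀ (y : V) (t t' : ℝ), y ≠ 0 → t • y = t' • y → t = t' := by
      intro y t t' hy0 hh
      have := congrArg (fun v => ⟪v, y⟫_ℝ) hh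
      simp only [real_inner_smul_left] at this
      have hyy : ⟪y, y⟫_ℝ ≠ 0 := inner_self_ne_zero.mpr hy0
      exact mul_right_cancel₀ hyy this
    refine ⟨c, ?_, ?_⟩
    · intro hc
      rw [hc, zero_smul] at hcy0
      have : y0 ∈ LinearMap.ker (Jacobi R x) := LinearMap.mem_ker.mpr (by rw [jac_apply]; exact hcy0)
      rw [hker] at this
      obtain ⟨t, ht⟩ := Submodule.mem_span_singleton.mp this
      have : ⟪x, y0⟫_ℝ = t := by rw [← ht, real_inner_smul_right, hxx]; ring
      rw [hy0x] at this
      rw [← ht, ← this, zero_smul] at hy00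
      exact hy00 rfl
    · intro y hy
      obtain ⟨t, ht⟩ := hperp y hy
      by_cases hy0 : y = 0
      · rw [hy0]; simp
      suffices hgoal : t = c by rw [ht, hgoal]
      have hyy : ⟪y, y⟫_ℝ ≠ 0 := inner_self_ne_zero.mpr hy0
      set s := ⟪y, y0⟫_ℝ / ⟪y, y⟫_ℝ with hs
      set z := y0 - s • y with hz
      have hy0eq : y0 = z + s • y := by rw [hz]; abel
      have hzx : ⟪x, z⟫_ℝ = 0 := by
        rw [hz, inner_sub_right, real_inner_smul_right, hy0x, hy]; ring
      have hzy : ⟪y, z⟫_ℝ = 0 := by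
        rw [hz, inner_sub_right, real_inner_smul_right, hs]
        field_simp
        ring
      have hyz : ⟪z, y⟫_ℝ = 0 := by rw [real_inner_comm]; exact hzy
      by_cases hz0 : z = 0
      · -- y0 = s • y with s ≠ 0
        have hy0s : y0 = s • y := by rw [hy0eq, hz0, zero_add]
        have hsne : s ≠ 0 := by
          intro h
          rw [h, zero_smul] at hy0s
          exact hy00 hy0s
        have h2 : R y0 x x = (s * t) • y := by
          simp only [hy0s, map_smul, LinearMap.smul_apply, ht, smul_smul]
        have h1 : (s * t) • y = (c * s) • y := by
          rw [← h2, hcy0, hy0s, smul_smul]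
        have h3 := huniq y (s * t) (c * s) hy0 h1
        exact mul_left_cancel₀ hsne (by linarith)
      · obtain ⟨tz, htz⟩ := hperp z hzx
        obtain ⟨tw, htw⟩ := hperp (y + z)
          (by rw [inner_add_right, hy, hzx]; ring)
        have hsum : R (y + z) x x = t • y + tz • z := by
          simp only [map_add, LinearMap.add_apply, ht, htz]
        rw [htw] at hsum
        have h1 : tw = t := by
          have h2 := congrArg (fun v => ⟪v, y⟫_ℝ) hsum
          simp only [inner_add_left, real_inner_smul_left, hyz] at h2
          have : tw * ⟪y, y⟫_ℝ = t * ⟪y, y⟫_ℝ := by linarith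
          exact mul_right_cancel₀ hyy this
        have hzz : ⟪z, z⟫_ℝ ≠ 0 := inner_self_ne_zero.mpr hz0
        have h2 : tw = tz := by
          have h2 := congrArg (fun v => ⟪v, z⟫_ℝ) hsum
          simp only [inner_add_left, real_inner_smul_left, hzy] at h2
          have : tw * ⟪z, z⟫_ℝ = tz * ⟪z, z⟫_ℝ := by linarith
          exact mul_right_cancel₀ hzz this
        -- relate tz to c
        have h3 : c • y0 = tz • z + (s * t) • y := by
          rw [← hcy0]
          conv_lhs => rw [hy0eq]
          simp only [map_add, LinearMap.add_apply, map_smul, LinearMap.smul_apply, htz, ht, smul_smul]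
        have h4 : c = tz := by
          have h5 := congrArg (fun v => ⟪v, z⟫_ℝ) h3
          simp only [inner_add_left, real_inner_smul_left, hzy] at h5
          have h6 : ⟪y0, z⟫_ℝ = ⟪z, z⟫_ℝ := by
            conv_lhs => rw [hy0eq]
            rw [inner_add_left, real_inner_smul_left, hzy]; ring
          rw [h6] at h5
          have : c * ⟪z, z⟫_ℝ = tz * ⟪z, z⟫_ℝ := by linarith
          exact mul_right_cancel₀ hzz this
        rw [h1] at h2
        rw [h2, h4]
  -- J(y) on vectors orthogonal to x and y
  have hJyW : ∀ y w : V, ⟪x, y⟫_ℝ = 0 → ⟪x, w⟫_ℝ = 0 → ⟪y, w⟫_ℝ = 0 →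
      R w y y = (c * ⟪y, y⟫_ℝ) • w := by
    intro y w hy hw hyw
    have h := hH y w hy hw hyw
    rw [jac_apply R x w] at h
    rw [jac_apply R y (R w x x)] at h
    rw [hJx w hw, hJx y hy] at h
    simp only [map_smul, LinearMap.smul_apply, real_inner_smul_left] at h
    apply smul_right_injective V hc0
    show c • R w y y = c • ((c * ⟪y, y⟫_ℝ) • w)
    rw [h]
    module
  -- full Jacobi operator for y ⊥ x
  have hJ : ∀ y z : V, ⟪x, y⟫_ℝ = 0 →
      R z y y = c • (⟪y, y⟫_ℝ • z - ⟪y, z⟫_ℝ • y) := by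
    intro y z hy
    by_cases hy0 : y = 0
    · rw [hy0]; simp
    have hyy : ⟪y, y⟫_ℝ ≠ 0 := inner_self_ne_zero.mpr hy0
    have hyx : ⟪y, x⟫_ℝ = 0 := by rw [real_inner_comm]; exact hy
    set a := ⟪x, z⟫_ℝ with ha
    set b := ⟪y, z⟫_ℝ / ⟪y, y⟫_ℝ with hb
    set w0 := z - a • x - b • y with hw0
    have hzdec : z = a • x + b • y + w0 := by rw [hw0]; abel
    have hw0x : ⟪x, w0⟫_ℝ = 0 := by
      rw [hw0, inner_sub_right, inner_sub_right, real_inner_smul_right,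
        real_inner_smul_right, hxx, hy]
      ring
    have hw0y : ⟪y, w0⟫_ℝ = 0 := by
      rw [hw0, inner_sub_right, inner_sub_right, real_inner_smul_right,
        real_inner_smul_right, hyx, hb]
      field_simp
      ring
    have hbz : ⟪y, z⟫_ℝ = b * ⟪y, y⟫_ℝ := by rw [hb]; field_simp
    have hxyy : R x y y = (c * ⟪y, y⟫_ℝ) • x := by
      rw [hstar y hy, hJx y hy, real_inner_smul_left]
    have hyyy : R y y y = 0 := R_diag hR y y
    have hw0yy : R w0 y y = (c * ⟪y, y⟫_ℝ) • w0 := hJyW y w0 hy hw0x hw0y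
    conv_lhs => rw [hzdec]
    simp only [map_add, map_smul, LinearMap.add_apply, LinearMap.smul_apply,
      hxyy, hyyy, hw0yy]
    rw [hbz]
    conv_rhs => rw [hzdec]
    module
  -- Jacobi operator of x itself
  have hJx' : ∀ z : V, R z x x = c • (⟪x, x⟫_ℝ • z - ⟪x, z⟫_ℝ • x) := by
    intro z
    set a := ⟪x, z⟫_ℝ with ha
    set z' := z - a • x with hz'
    have hzdec : z = a • x + z' := by rw [hz']; abel
    have hz'x : ⟪x, z'⟫_ℝ = 0 := by
      rw [hz', inner_sub_right, real_inner_smul_right, hxx]; ring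
    have h1 : R z' x x = c • z' := hJx z' hz'x
    have h2 : R x x x = 0 := R_diag hR x x
    conv_lhs => rw [hzdec]
    simp only [map_add, map_smul, LinearMap.add_apply, LinearMap.smul_apply, h1, h2]
    conv_rhs => rw [hzdec, hxx]
    module
  -- polarization of hstar
  have hstar2 : ∀ u v : V, ⟪x, u⟫_ℝ = 0 → ⟪x, v⟫_ℝ = 0 →
      R x u v + R x v u = (2 * c * ⟪u, v⟫_ℝ) • x := by
    intro u v hu hv
    have e : R x (u + v) (u + v) = R x u u + (R x u v + R x v u) + R x v v := by
      simp only [map_add, LinearMap.add_apply]; abel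
    have hsc : ⟪R (u + v) x x, u + v⟫_ℝ =
        ⟪R u x x, u⟫_ℝ + ⟪R v x x, v⟫_ℝ + 2 * c * ⟪u, v⟫_ℝ := by
      simp only [map_add, LinearMap.add_apply, inner_add_left, inner_add_right,
        hJx u hu, hJx v hv, real_inner_smul_left]
      rw [real_inner_comm v u]; ring
    have h := hstar (u + v) (by rw [inner_add_right, hu, hv]; ring)
    rw [e, hsc, hstar u hu, hstar v hv] at h
    have h2 : R x u v + R x v u =
        (⟪R u x x, u⟫_ℝ + ⟪R v x x, v⟫_ℝ + 2 * c * ⟪u, v⟫_ℝ) • x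
          - ⟪R u x x, u⟫_ℝ • x - ⟪R v x x, v⟫_ℝ • x := by
      rw [← h]; abel
    rw [h2]; module
  -- vanishing of mixed components
  have hF0 : ∀ u v w : V, ⟪x, u⟫_ℝ = 0 → ⟪x, v⟫_ℝ = 0 → ⟪x, w⟫_ℝ = 0 →
      ⟪R x u v, w⟫_ℝ = 0 := by
    have hA12 : ∀ p q r : V, ⟪x, p⟫_ℝ = 0 → ⟪x, q⟫_ℝ = 0 → ⟪x, r⟫_ℝ = 0 →
        ⟪R x p q, r⟫_ℝ + ⟪R x q p, r⟫_ℝ = 0 := by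
      intro p q r hp hq hr
      have h := congrArg (fun t => ⟪t, r⟫_ℝ) (hstar2 p q hp hq)
      simp only [inner_add_left, real_inner_smul_left] at h
      rw [hr] at h
      linarith
    intro u v w hu hv hw
    have hb := hR.2.2 x u v w
    have h1 : ⟪R u v x, w⟫_ℝ = ⟪R x u v, w⟫_ℝ := by
      rw [pair hR u v x w]
      have h2 := hA12 w u v hw hu hv
      have h3 := anti34 hR x u v w
      linarith
    have h2 : ⟪R v x u, w⟫_ℝ = ⟪R x u v, w⟫_ℝ := by
      have h3 := anti12 hR v x u w
      have h4 := hA12 u v w hu hv hw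
      linarith
    linarith
  -- cross terms
  have hcrossW : ∀ z y : V, ⟪x, z⟫_ℝ = 0 → ⟪x, y⟫_ℝ = 0 →
      R z x y + R z y x = (-(c * ⟪z, y⟫_ℝ)) • x := by
    intro z y hz hy
    apply ext_inner_right ℝ
    intro v
    set s := ⟪x, v⟫_ℝ with hs
    set v' := v - s • x with hv'
    have hvdec : v = s • x + v' := by rw [hv']; abel
    have hv'x : ⟪x, v'⟫_ℝ = 0 := by
      rw [hv', inner_sub_right, real_inner_smul_right, hxx]; ring
    have c1 : ⟪R z x y, x⟫_ℝ = -(c * ⟪z, y⟫_ℝ) := by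
      have e1 := anti12 hR z x y x
      have e2 : ⟪R x z y, x⟫_ℝ = ⟪R y x x, z⟫_ℝ := pair hR x z y x
      have e3 : ⟪R y x x, z⟫_ℝ = ⟪R z x x, y⟫_ℝ := jac_symm hR x y z
      have e4 : ⟪R z x x, y⟫_ℝ = c * ⟪z, y⟫_ℝ := by
        rw [hJx z hz, real_inner_smul_left]
      -- ⟪R z x y, x⟫ = −⟪R x z y, x⟫ = −⟪R y x x, z⟫ = −c⟪z,y⟫
      rw [e1, e2, e3, e4]
    have c2 : ⟪R z y x, x⟫_ℝ = 0 := by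
      have := anti34 hR z y x x; linarith
    have c3 : ⟪R z x y, v'⟫_ℝ = 0 := by
      have e1 := anti12 hR z x y v'
      rw [e1, hF0 z y v' hz hy hv'x]; ring
    have c4 : ⟪R z y x, v'⟫_ℝ = 0 := by
      rw [pair hR z y x v']
      exact hF0 v' z y hv'x hz hy
    rw [inner_add_left]
    conv_lhs => rw [hvdec]
    rw [inner_add_right, inner_add_right, real_inner_smul_right, real_inner_smul_right,
      c1, c2, c3, c4, real_inner_smul_left]
    conv_rhs => rw [hvdec]
    rw [inner_add_right, real_inner_smul_right, hxx, hv'x]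
    ring
  have hcross : ∀ z y : V, ⟪x, y⟫_ℝ = 0 →
      R z x y + R z y x = (-(c * ⟪z, y⟫_ℝ)) • x - (c * ⟪x, z⟫_ℝ) • y := by
    intro z y hy
    set s := ⟪x, z⟫_ℝ with hs
    set z' := z - s • x with hz'
    have hzdec : z = s • x + z' := by rw [hz']; abel
    have hz'x : ⟪x, z'⟫_ℝ = 0 := by
      rw [hz', inner_sub_right, real_inner_smul_right, hxx]; ring
    have h1 := hcrossW z' y hz'x hy
    have h2 : ⟪z', y⟫_ℝ = ⟪z, y⟫_ℝ := by
      rw [hz', inner_sub_left, real_inner_smul_left, hy]; ring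
    have e : R z x y + R z y x =
        s • (R x x y) + s • (R x y x) + (R z' x y + R z' y x) := by
      conv_lhs => rw [hzdec]
      simp only [map_add, map_smul, LinearMap.add_apply, LinearMap.smul_apply]
      abel
    rw [e, R_diag hR x y, R_swap hR x y x, hJx y hy, h1, h2]
    module
  -- full Jacobi operator identity
  have hJall : ∀ a z : V, R z a a = c • (⟪a, a⟫_ℝ • z - ⟪a, z⟫_ℝ • a) := by
    intro a z
    set t := ⟪x, a⟫_ℝ with ht
    set y := a - t • x with hy'
    have hadec : a = t • x + y := by rw [hy']; abel
    have hyx : ⟪x, y⟫_ℝ = 0 := by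
      rw [hy', inner_sub_right, real_inner_smul_right, hxx]; ring
    have e : R z a a = (t * t) • R z x x + t • (R z x y + R z y x) + R z y y := by
      conv_lhs => rw [hadec]
      simp only [map_add, map_smul, LinearMap.add_apply, LinearMap.smul_apply, smul_add,
        smul_smul]
      abel
    have haa : ⟪a, a⟫_ℝ = t * t + ⟪y, y⟫_ℝ := by
      conv_lhs => rw [hadec]
      simp only [inner_add_left, inner_add_right, real_inner_smul_left,
        real_inner_smul_right, hxx, hyx]
      have h5 : ⟪y, x⟫_ℝ = (0:ℝ) := by rw [real_inner_comm]; exact hyx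
      rw [h5]
      ring
    have haz : ⟪a, z⟫_ℝ = t * ⟪x, z⟫_ℝ + ⟪y, z⟫_ℝ := by
      conv_lhs => rw [hadec]
      rw [inner_add_left, real_inner_smul_left]
    rw [e, hJx' z, hcross z y hyx, hJ y z hyx, haa, haz, real_inner_comm z y, hxx]
    conv_rhs => rw [hadec]
    module
  -- polarization of hJall
  have hpol : ∀ z a d : V, R z a d + R z d a =
      c • ((2 * ⟪a, d⟫_ℝ) • z - ⟪a, z⟫_ℝ • d - ⟪d, z⟫_ℝ • a) := by
    intro z a d
    have e : R z (a + d) (a + d) = R z a a + (R z a d + R z d a) + R z d d := by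
      simp only [map_add, LinearMap.add_apply]
      abel
    have h := hJall (a + d) z
    rw [e, hJall a z, hJall d z] at h
    have h2 : R z a d + R z d a =
        c • (⟪a + d, a + d⟫_ℝ • z - ⟪a + d, z⟫_ℝ • (a + d))
          - c • (⟪a, a⟫_ℝ • z - ⟪a, z⟫_ℝ • a) - c • (⟪d, d⟫_ℝ • z - ⟪d, z⟫_ℝ • d) := by
      rw [← h]; abel
    have h3 : ⟪a + d, a + d⟫_ℝ = ⟪a, a⟫_ℝ + 2 * ⟪a, d⟫_ℝ + ⟪d, d⟫_ℝ := by
      rw [inner_add_left, inner_add_right, inner_add_right, real_inner_comm d a]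
      ring
    have h4 : ⟪a + d, z⟫_ℝ = ⟪a, z⟫_ℝ + ⟪d, z⟫_ℝ := inner_add_left a d z
    rw [h2, h3, h4]
    module
  -- final algebraic step
  -- the difference tensor is totally antisymmetric with zero Bianchi sum, hence zero
  have hD2 : ∀ a b d : V, R a b d - c • (⟪b, d⟫_ℝ • a - ⟪a, d⟫_ℝ • b)
      = -(R a d b - c • (⟪d, b⟫_ℝ • a - ⟪a, b⟫_ℝ • d)) := by
    intro a b d
    apply eq_neg_of_add_eq_zero_left
    have h := hpol a b d
    have e : R a b d - c • (⟪b, d⟫_ℝ • a - ⟪a, d⟫_ℝ • b)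
        + (R a d b - c • (⟪d, b⟫_ℝ • a - ⟪a, b⟫_ℝ • d))
        = (R a b d + R a d b) - c • (⟪b, d⟫_ℝ • a - ⟪a, d⟫_ℝ • b)
          - c • (⟪d, b⟫_ℝ • a - ⟪a, b⟫_ℝ • d) := by abel
    rw [e, h, real_inner_comm d b, real_inner_comm b a, real_inner_comm d a]
    module
  have hD1 : ∀ a b d : V, R a b d - c • (⟪b, d⟫_ℝ • a - ⟪a, d⟫_ℝ • b)
      = -(R b a d - c • (⟪a, d⟫_ℝ • b - ⟪b, d⟫_ℝ • a)) := by
    intro a b d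
    apply eq_neg_of_add_eq_zero_left
    have h : R a b d + R b a d = 0 := by
      rw [R_swap hR a b d]; abel
    have e : R a b d - c • (⟪b, d⟫_ℝ • a - ⟪a, d⟫_ℝ • b)
        + (R b a d - c • (⟪a, d⟫_ℝ • b - ⟪b, d⟫_ℝ • a))
        = (R a b d + R b a d) - c • (⟪b, d⟫_ℝ • a - ⟪a, d⟫_ℝ • b)
          - c • (⟪a, d⟫_ℝ • b - ⟪b, d⟫_ℝ • a) := by abel
    rw [e, h]
    module
  have hD3 : ∀ a b d : V,
      (R a b d - c • (⟪b, d⟫_ℝ • a - ⟪a, d⟫_ℝ • b))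
      + (R b d a - c • (⟪d, a⟫_ℝ • b - ⟪b, a⟫_ℝ • d))
      + (R d a b - c • (⟪a, b⟫_ℝ • d - ⟪d, b⟫_ℝ • a)) = 0 := by
    intro a b d
    have h := bianchi_vec hR a b d
    have e : (R a b d - c • (⟪b, d⟫_ℝ • a - ⟪a, d⟫_ℝ • b))
        + (R b d a - c • (⟪d, a⟫_ℝ • b - ⟪b, a⟫_ℝ • d))
        + (R d a b - c • (⟪a, b⟫_ℝ • d - ⟪d, b⟫_ℝ • a))
        = (R a b d + R b d a + R d a b)
          - c • (⟪b, d⟫_ℝ • a - ⟪a, d⟫_ℝ • b)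
          - c • (⟪d, a⟫_ℝ • b - ⟪b, a⟫_ℝ • d)
          - c • (⟪a, b⟫_ℝ • d - ⟪d, b⟫_ℝ • a) := by abel
    rw [e, h, real_inner_comm d a, real_inner_comm b a, real_inner_comm d b]
    module
  refine ⟨c, hc0, ?_⟩
  intro a b d
  have k1 : R b d a - c • (⟪d, a⟫_ℝ • b - ⟪b, a⟫_ℝ • d)
      = R a b d - c • (⟪b, d⟫_ℝ • a - ⟪a, d⟫_ℝ • b) := by
    rw [hD2 b d a, hD1 b a d]
    rw [neg_neg]
  have k2 : R d a b - c • (⟪a, b⟫_ℝ • d - ⟪d, b⟫_ℝ • a)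
      = R a b d - c • (⟪b, d⟫_ℝ • a - ⟪a, d⟫_ℝ • b) := by
    rw [hD1 d a b, hD2 a d b]
    rw [neg_neg]
  have h := hD3 a b d
  rw [k1, k2] at h
  have h3 : (3 : ℝ) • (R a b d - c • (⟪b, d⟫_ℝ • a - ⟪a, d⟫_ℝ • b)) = 0 := by
    rw [show (3 : ℝ) • (R a b d - c • (⟪b, d⟫_ℝ • a - ⟪a, d⟫_ℝ • b))
        = (R a b d - c • (⟪b, d⟫_ℝ • a - ⟪a, d⟫_ℝ • b))
          + (R a b d - c • (⟪b, d⟫_ℝ • a - ⟪a, d⟫_ℝ • b))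
          + (R a b d - c • (⟪b, d⟫_ℝ • a - ⟪a, d⟫_ℝ • b)) by module]
    exact h
  have h4 := smul_eq_zero.mp h3
  rcases h4 with h4 | h4
  · norm_num at h4
  · exact sub_eq_zero.mp h4
end
end

section
/- Let R ≠ 0 be a Jacobi-Tsankov algebraic curvature tensor with r(z) < m-1 for all z. Fix a unit vector x with r(x) ≠ 0 and set W(x) = ℝ·x ⊕ Range(J(x)). Then for every unit vector w ∈ W(x): Range(J(w)) ⊆ W(x), J(w) vanishes on W(x)^⊥, and J(w) is similar (conjugate) to J(x). -/
open scoped InnerProductSpace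
noncomputable section

variable {V : Type*} [NormedAddCommGroup V] [InnerProductSpace ℝ V]

namespace JTaux

variable {R : V →ₗ[ℝ] V →ₗ[ℝ] V →ₗ[ℝ] V}

lemma ext_inner {v v' : V} (h : ∀ d : V, ⟪v, d⟫_ℝ = ⟪v', d⟫_ℝ) : v = v' := by
  have h2 : ∀ d : V, ⟪v - v', d⟫_ℝ = 0 := by
    intro d; rw [inner_sub_left, h d]; ring
  have := h2 (v - v')
  rwa [inner_self_eq_zero, sub_eq_zero] at this

lemma jac_apply (x y : V) : Jacobi R x y = R y x x := rfl

lemma jacP_apply (x y z : V) :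
    JacobiP R x y z = (1/2 : ℝ) • R z x y + (1/2 : ℝ) • R z y x := rfl

lemma R_anti2 (hR : IsCurvatureOperator R) (a b c d : V) :
    ⟪R a b c, d⟫_ℝ = - ⟪R a b d, c⟫_ℝ :=
  calc ⟪R a b c, d⟫_ℝ = ⟪R c d a, b⟫_ℝ := hR.1 a b c d
    _ = - ⟪R d c a, b⟫_ℝ := hR.2.1 c d a b
    _ = - ⟪R a b d, c⟫_ℝ := by rw [hR.1 d c a b]

lemma jac_self (hR : IsCurvatureOperator R) (x : V) : Jacobi R x x = 0 := by
  apply ext_inner; intro d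
  have h := hR.2.1 x x x d
  rw [jac_apply]
  simp only [inner_zero_left]
  linarith

lemma jac_symm (hR : IsCurvatureOperator R) (x a b : V) :
    ⟪Jacobi R x a, b⟫_ℝ = ⟪a, Jacobi R x b⟫_ℝ :=
  calc ⟪Jacobi R x a, b⟫_ℝ = ⟪R x b a, x⟫_ℝ := hR.1 a x x b
    _ = - ⟪R b x a, x⟫_ℝ := hR.2.1 x b a x
    _ = ⟪R b x x, a⟫_ℝ := by rw [R_anti2 hR b x a x]; ring
    _ = ⟪a, Jacobi R x b⟫_ℝ := real_inner_comm _ _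

lemma jacP_comm (x y : V) : JacobiP R x y = JacobiP R y x := by
  ext z; rw [jacP_apply, jacP_apply, add_comm]

lemma jacP_self (x : V) : JacobiP R x x = Jacobi R x := by
  ext z; rw [jacP_apply, jac_apply]; module

lemma jacP_aba (hR : IsCurvatureOperator R) (a b : V) :
    JacobiP R a b a = -(1/2 : ℝ) • Jacobi R a b := by
  have h1 : R a a b = 0 := by
    apply ext_inner; intro d
    have := hR.2.1 a a b d
    simp only [inner_zero_left]; linarith
  have h2 : R a b a = - R b a a := by
    apply ext_inner; intro d
    rw [inner_neg_left]; exact hR.2.1 a b a d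
  rw [jacP_apply, jac_apply, h1, h2]; module

-- linearity of JacobiP in first argument
lemma jacP_add_left (a b y : V) :
    JacobiP R (a + b) y = JacobiP R a y + JacobiP R b y := by
  ext z; simp only [jacP_apply, LinearMap.add_apply, map_add, LinearMap.add_apply]; module

lemma jacP_smul_left (c : ℝ) (a y : V) :
    JacobiP R (c • a) y = c • JacobiP R a y := by
  ext z; simp only [jacP_apply, LinearMap.smul_apply, map_smul, LinearMap.smul_apply]; module

lemma jacP_smul_right (c : ℝ) (a y : V) :
    JacobiP R a (c • y) = c • JacobiP R a y := by
  rw [jacP_comm, jacP_smul_left, jacP_comm]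

lemma jac_add (a b z : V) :
    Jacobi R (a + b) z = Jacobi R a z + Jacobi R b z + (2:ℝ) • JacobiP R a b z := by
  simp only [jac_apply, jacP_apply, map_add, LinearMap.add_apply]; module

lemma jac_smul (c : ℝ) (a : V) : Jacobi R (c • a) = (c^2) • Jacobi R a := by
  ext z; simp only [jac_apply, LinearMap.smul_apply, map_smul, LinearMap.smul_apply]; module

lemma jac_zero : Jacobi R 0 = 0 := by
  ext z; simp [jac_apply]

lemma jacP_zero_right (a : V) : JacobiP R a 0 = 0 := by
  ext z; simp [jacP_apply]

lemma jacP_selfadj (hR : IsCurvatureOperator R) (a b c d : V) :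
    ⟪JacobiP R a b c, d⟫_ℝ = ⟪c, JacobiP R a b d⟫_ℝ := by
  have e1 : ⟪R c a b, d⟫_ℝ = ⟪R d b a, c⟫_ℝ := by
    calc ⟪R c a b, d⟫_ℝ = ⟪R b d c, a⟫_ℝ := hR.1 c a b d
      _ = - ⟪R d b c, a⟫_ℝ := hR.2.1 b d c a
      _ = ⟪R d b a, c⟫_ℝ := by rw [R_anti2 hR d b c a]; ring
  have e2 : ⟪R c b a, d⟫_ℝ = ⟪R d a b, c⟫_ℝ := by
    calc ⟪R c b a, d⟫_ℝ = ⟪R a d c, b⟫_ℝ := hR.1 c b a d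
      _ = - ⟪R d a c, b⟫_ℝ := hR.2.1 a d c b
      _ = ⟪R d a b, c⟫_ℝ := by rw [R_anti2 hR d a c b]; ring
  have f1 : ⟪c, JacobiP R a b d⟫_ℝ = ⟪JacobiP R a b d, c⟫_ℝ := real_inner_comm _ _
  rw [f1, jacP_apply, jacP_apply]
  simp only [inner_add_left, real_inner_smul_left]
  rw [e1, e2]; ring

lemma jacP_swap (hR : IsCurvatureOperator R) (a b c d : V) :
    ⟪JacobiP R a b c, d⟫_ℝ = ⟪JacobiP R c d a, b⟫_ℝ := by
  have e1 : ⟪R c a b, d⟫_ℝ = ⟪R a c d, b⟫_ℝ := by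
    calc ⟪R c a b, d⟫_ℝ = ⟪R b d c, a⟫_ℝ := hR.1 c a b d
      _ = - ⟪R d b c, a⟫_ℝ := hR.2.1 b d c a
      _ = ⟪R d b a, c⟫_ℝ := by rw [R_anti2 hR d b c a]; ring
      _ = ⟪R a c d, b⟫_ℝ := (hR.1 a c d b).symm
  have e2 : ⟪R c b a, d⟫_ℝ = ⟪R a d c, b⟫_ℝ := hR.1 c b a d
  rw [jacP_apply, jacP_apply]
  simp only [inner_add_left, real_inner_smul_left]
  rw [e1, e2]

lemma jac_neg (b : V) : Jacobi R (-b) = Jacobi R b := by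
  rw [← neg_one_smul ℝ b, jac_smul]; norm_num

lemma jacP_neg_right (a b : V) : JacobiP R a (-b) = - JacobiP R a b := by
  rw [← neg_one_smul ℝ b, jacP_smul_right]; module

lemma jac_sub (a b z : V) :
    Jacobi R (a - b) z = Jacobi R a z + Jacobi R b z - (2:ℝ) • JacobiP R a b z := by
  rw [sub_eq_add_neg, jac_add, jac_neg, jacP_neg_right]
  simp only [LinearMap.neg_apply]; module

lemma comm_pt (hT : JacobiTsankov R) {a b : V} (h : ⟪a, b⟫_ℝ = 0) (v : V) :
    Jacobi R a (Jacobi R b v) = Jacobi R b (Jacobi R a v) := by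
  have := congrArg (fun L : V →ₗ[ℝ] V => L v) (hT a b h)
  simpa using this

lemma inner_self_one {x : V} (hx : ‖x‖ = 1) : ⟪x, x⟫_ℝ = 1 := by
  rw [real_inner_self_eq_norm_sq, hx]; norm_num

lemma lemA (hR : IsCurvatureOperator R) (hT : JacobiTsankov R)
    {x e : V} {μ : ℝ} (hx : ‖x‖ = 1) (he : ‖e‖ = 1) (hxe : ⟪x, e⟫_ℝ = 0)
    (heig : Jacobi R x e = μ • e) : Jacobi R e x = μ • x := by
  have hJxx : Jacobi R x x = 0 := jac_self hR x
  have hJee : Jacobi R e e = 0 := jac_self hR e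
  have hPx : JacobiP R x e x = -(μ/2) • e := by
    rw [jacP_aba hR x e, heig]; module
  have hPe : JacobiP R x e e = -(1/2 : ℝ) • Jacobi R e x := by
    rw [jacP_comm, jacP_aba hR e x]
  have hxx : ⟪x, x⟫_ℝ = 1 := inner_self_one hx
  have hee : ⟪e, e⟫_ℝ = 1 := inner_self_one he
  have horth1 : ⟪x + e, x - e⟫_ℝ = 0 := by
    rw [inner_add_left, inner_sub_right, inner_sub_right, hxx, hee, hxe,
      real_inner_comm x e, hxe]; ring
  have h1 : Jacobi R (x - e) x = Jacobi R e x + μ • e := by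
    rw [jac_sub, hJxx, hPx]; module
  have h2 : Jacobi R (x + e) x = Jacobi R e x - μ • e := by
    rw [jac_add, hJxx, hPx]; module
  have h3 := comm_pt hT horth1 x
  rw [h1, h2] at h3
  have hL : Jacobi R (x + e) (Jacobi R e x + μ • e) =
      Jacobi R x (Jacobi R e x) + Jacobi R e (Jacobi R e x)
        + (2:ℝ) • JacobiP R x e (Jacobi R e x) + (μ^2) • e - μ • Jacobi R e x := by
    rw [map_add, map_smul, jac_add, jac_add, heig, hJee, hPe]; module
  have hRr : Jacobi R (x - e) (Jacobi R e x - μ • e) =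
      Jacobi R x (Jacobi R e x) + Jacobi R e (Jacobi R e x)
        - (2:ℝ) • JacobiP R x e (Jacobi R e x) - (μ^2) • e - μ • Jacobi R e x := by
    rw [map_sub, map_smul, jac_sub, jac_sub, heig, hJee, hPe]; module
  rw [hL, hRr] at h3
  have hPu : JacobiP R x e (Jacobi R e x) = -(μ^2/2) • e := by
    linear_combination (norm := module) (1/4 : ℝ) • h3
  have h3e := comm_pt hT horth1 e
  have h1e : Jacobi R (x - e) e = μ • e + Jacobi R e x := by
    rw [jac_sub, heig, hJee, hPe]; module
  have h2e : Jacobi R (x + e) e = μ • e - Jacobi R e x := by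
    rw [jac_add, heig, hJee, hPe]; module
  rw [h1e, h2e] at h3e
  have hLe : Jacobi R (x + e) (μ • e + Jacobi R e x) =
      μ^2 • e - μ • Jacobi R e x + Jacobi R x (Jacobi R e x)
        + Jacobi R e (Jacobi R e x) - μ^2 • e := by
    rw [map_add, map_smul, jac_add, jac_add, heig, hJee, hPe, hPu]; module
  have hRe : Jacobi R (x - e) (μ • e - Jacobi R e x) =
      μ^2 • e + μ • Jacobi R e x
        - (Jacobi R x (Jacobi R e x) + Jacobi R e (Jacobi R e x)) - μ^2 • e := by
    rw [map_sub, map_smul, jac_sub, jac_sub, heig, hJee, hPe, hPu]; module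
  rw [hLe, hRe] at h3e
  have hsum : Jacobi R x (Jacobi R e x) + Jacobi R e (Jacobi R e x) = μ • Jacobi R e x := by
    linear_combination (norm := module) (1/2 : ℝ) • h3e
  have hJxu : Jacobi R x (Jacobi R e x) = 0 := by
    have h := comm_pt hT hxe x
    rwa [hJxx, map_zero] at h
  have hJeu : Jacobi R e (Jacobi R e x) = μ • Jacobi R e x := by
    rw [hJxu, zero_add] at hsum; exact hsum
  have hux : ⟪Jacobi R e x, x⟫_ℝ = μ := by
    have h : ⟪Jacobi R e x, x⟫_ℝ = ⟪Jacobi R x e, e⟫_ℝ := hR.1 x e e x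
    rw [h, heig, real_inner_smul_left, hee]; ring
  have huu : ⟪Jacobi R e x, Jacobi R e x⟫_ℝ = μ^2 := by
    have h := jac_symm hR e x (Jacobi R e x)
    rw [hJeu, real_inner_smul_right, real_inner_comm (Jacobi R e x) x, hux] at h
    rw [real_inner_comm, h]; ring
  have hfin : ‖Jacobi R e x - μ • x‖^2 = 0 := by
    rw [norm_sub_sq_real, real_inner_smul_right, hux, norm_smul,
      ← real_inner_self_eq_norm_sq (Jacobi R e x), huu, mul_pow,
      ← real_inner_self_eq_norm_sq x, hxx]
    simp; ring
  have hz : Jacobi R e x - μ • x = 0 := by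
    have := pow_eq_zero_iff (n := 2) (by norm_num) |>.mp hfin
    exact norm_eq_zero.mp this
  linear_combination (norm := module) hz

lemma lemB (hR : IsCurvatureOperator R) (hT : JacobiTsankov R)
    {x e₁ e₂ : V} {μ₁ μ₂ : ℝ} (hx : ‖x‖ = 1) (he1 : ‖e₁‖ = 1) (he2 : ‖e₂‖ = 1)
    (hxe1 : ⟪x, e₁⟫_ℝ = 0) (hxe2 : ⟪x, e₂⟫_ℝ = 0) (he12 : ⟪e₁, e₂⟫_ℝ = 0)
    (h1 : Jacobi R x e₁ = μ₁ • e₁) (hμ₁ : μ₁ ≠ 0) (h2 : Jacobi R x e₂ = μ₂ • e₂) :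
    Jacobi R e₂ e₁ = μ₂ • e₁ := by
  have hA1 : Jacobi R e₁ x = μ₁ • x := lemA hR hT hx he1 hxe1 h1
  have hA2 : Jacobi R e₂ x = μ₂ • x := lemA hR hT hx he2 hxe2 h2
  have horth : ⟪e₂, x + e₁⟫_ℝ = 0 := by
    rw [inner_add_right, real_inner_comm x e₂, hxe2, real_inner_comm e₁ e₂, he12]; ring
  have hcomm := comm_pt hT horth x
  have hPx : JacobiP R x e₁ x = -(μ₁/2) • e₁ := by
    rw [jacP_aba hR x e₁, h1]; module
  have hJ1 : Jacobi R (x + e₁) x = μ₁ • x - μ₁ • e₁ := by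
    rw [jac_add, jac_self hR, hA1, hPx]; module
  rw [hJ1, hA2, map_sub, map_smul, map_smul, hA2, map_smul, hJ1] at hcomm
  have hkey : μ₁ • Jacobi R e₂ e₁ = μ₁ • (μ₂ • e₁) := by
    linear_combination (norm := module) (-1 : ℝ) • hcomm
  exact smul_right_injective V hμ₁ hkey

lemma step3 [FiniteDimensional ℝ V] (hR : IsCurvatureOperator R) (hT : JacobiTsankov R)
    {z : V} (hz : ‖z‖ = 1) :
    ∃ lam : ℝ, lam ≠ 0 ∧ (Jacobi R z) ∘ₗ (Jacobi R z) = lam • (Jacobi R z) := by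
  by_cases h0 : Jacobi R z = 0
  · exact ⟨1, one_ne_zero, by rw [h0]; simp⟩
  · have hsym : (Jacobi R z).IsSymmetric := fun a b => jac_symm hR z a b
    have hn : Module.finrank ℝ V = Module.finrank ℝ V := rfl
    set b := hsym.eigenvectorBasis hn with hb
    set ν := hsym.eigenvalues hn with hν
    have heig : ∀ i, Jacobi R z (b i) = ν i • b i := fun i => by
      exact_mod_cast hsym.apply_eigenvectorBasis hn i
    have hun : ∀ i, ‖b i‖ = 1 := fun i => b.orthonormal.1 i
    have hpair : ∀ i j, i ≠ j → ⟪b i, b j⟫_ℝ = 0 := fun i j hij => b.orthonormal.2 hij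
    have horthz : ∀ i, ν i ≠ 0 → ⟪z, b i⟫_ℝ = 0 := by
      intro i hi
      have h1 : ν i * ⟪b i, z⟫_ℝ = 0 := by
        have h2 : ⟪Jacobi R z (b i), z⟫_ℝ = ⟪b i, Jacobi R z z⟫_ℝ := hsym _ _
        rw [heig, jac_self hR, inner_zero_right, real_inner_smul_left] at h2
        exact h2
      rcases mul_eq_zero.mp h1 with h | h
      · exact absurd h hi
      · rw [real_inner_comm]; exact h
    have hvals : ∀ i j, ν i ≠ 0 → ν j ≠ 0 → ν i = ν j := by
      intro i j hi hj
      rcases eq_or_ne i j with rfl | hij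
      · rfl
      have hzi := horthz i hi
      have hzj := horthz j hj
      have hb1 : Jacobi R (b j) (b i) = ν j • b i :=
        lemB hR hT hz (hun i) (hun j) hzi hzj (hpair i j hij) (heig i) hi (heig j)
      have hb2 : Jacobi R (b i) (b j) = ν i • b j :=
        lemB hR hT hz (hun j) (hun i) hzj hzi (hpair j i hij.symm) (heig j) hj (heig i)
      have hb3 : Jacobi R (b i) (b j) = ν j • b j :=
        lemA hR hT (hun j) (hun i) (hpair j i hij.symm) hb1
      rw [hb3] at hb2
      have hbj : b j ≠ 0 := b.toBasis.ne_zero j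
      by_contra hne
      have : (ν j - ν i) • b j = 0 := by
        linear_combination (norm := module) hb2
      rcases smul_eq_zero.mp this with h | h
      · exact hne (by linarith)
      · exact hbj h
    obtain ⟨i₀, hi₀⟩ : ∃ i, ν i ≠ 0 := by
      by_contra hc
      push_neg at hc
      apply h0
      apply b.toBasis.ext
      intro i
      rw [LinearMap.zero_apply, OrthonormalBasis.coe_toBasis, heig, hc i, zero_smul]
    refine ⟨ν i₀, hi₀, ?_⟩
    apply b.toBasis.ext
    intro i
    rw [OrthonormalBasis.coe_toBasis, LinearMap.comp_apply, LinearMap.smul_apply,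
      heig i, map_smul, heig i]
    rcases eq_or_ne (ν i) 0 with h | h
    · rw [h]; simp
    · rw [hvals i i₀ h hi₀]

end JTaux

open JTaux in
theorem stmt15 [FiniteDimensional ℝ V] (hm : 3 ≤ Module.finrank ℝ V)
    (R : V →ₗ[ℝ] V →ₗ[ℝ] V →ₗ[ℝ] V) (hR : IsCurvatureOperator R)
    (hT : JacobiTsankov R) (hne : R ≠ 0)
    (hsmall : ∀ z : V, Module.finrank ℝ (LinearMap.range (Jacobi R z)) <
      Module.finrank ℝ V - 1)
    (x : V) (hx : ‖x‖ = 1)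
    (hr : Module.finrank ℝ (LinearMap.range (Jacobi R x)) ≠ 0) :
    ∀ w : V, w ∈ (ℝ ∙ x) ⊔ LinearMap.range (Jacobi R x) → ‖w‖ = 1 →
      LinearMap.range (Jacobi R w) ≤ (ℝ ∙ x) ⊔ LinearMap.range (Jacobi R x) ∧
      (∀ u : V, u ∈ ((ℝ ∙ x) ⊔ LinearMap.range (Jacobi R x))ᗮ → Jacobi R w u = 0) ∧
      ∃ g : V ≃ₗ[ℝ] V,
        Jacobi R w = g.toLinearMap ∘ₗ Jacobi R x ∘ₗ g.symm.toLinearMap := by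
  classical
  have hxx : ⟪x, x⟫_ℝ = 1 := inner_self_one hx
  have hx0 : x ≠ 0 := by intro h; rw [h, norm_zero] at hx; norm_num at hx
  obtain ⟨lam, hlam, hsq⟩ := step3 hR hT hx
  set E := LinearMap.range (Jacobi R x) with hE
  set W := (ℝ ∙ x) ⊔ E with hWdef
  -- basic membership facts
  have hxW : x ∈ W := Submodule.mem_sup_left (Submodule.mem_span_singleton_self x)
  have hEW : E ≤ W := le_sup_right
  have hWdecomp : ∀ v ∈ W, ∃ (γ : ℝ) (u : V), u ∈ E ∧ v = γ • x + u := by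
    intro v hv
    rcases Submodule.mem_sup.mp hv with ⟨a, ha, u, hu, rfl⟩
    rcases Submodule.mem_span_singleton.mp ha with ⟨γ, rfl⟩
    exact ⟨γ, u, hu, rfl⟩
  have hWmem : ∀ (γ : ℝ) (u : V), u ∈ E → γ • x + u ∈ W := fun γ u hu =>
    Submodule.add_mem_sup (Submodule.smul_mem _ γ (Submodule.mem_span_singleton_self x)) hu
  have hKx : ∀ k ∈ Wᗮ, ⟪x, k⟫_ℝ = 0 := fun k hk =>
    (Submodule.mem_orthogonal W k).mp hk x hxW
  have hKW : ∀ k ∈ Wᗮ, ∀ v ∈ W, ⟪v, k⟫_ℝ = 0 := fun k hk v hv =>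
    (Submodule.mem_orthogonal W k).mp hk v hv
  -- m1 : E ⟂ x
  have hxE : ∀ v ∈ E, ⟪x, v⟫_ℝ = 0 := by
    rintro v ⟨u, rfl⟩
    have h := jac_symm hR x x u
    rw [jac_self hR, inner_zero_left] at h
    exact h.symm
  -- m2 : J x = lam on E
  have hTE : ∀ v ∈ E, Jacobi R x v = lam • v := by
    rintro v ⟨u, rfl⟩
    have h := congrArg (fun L : V →ₗ[ℝ] V => L u) hsq
    simpa using h
  -- m4 : J x = 0 on K
  have hTK : ∀ k ∈ Wᗮ, Jacobi R x k = 0 := by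
    intro k hk
    apply ext_inner; intro d
    rw [inner_zero_left, jac_symm hR x k d, real_inner_comm]
    exact hKW k hk (Jacobi R x d) (hEW ⟨d, rfl⟩)
  -- orthogonal machinery
  have hcompl : Wᗮᗮ = W := Submodule.orthogonal_orthogonal W
  have hWofK : ∀ v : V, (∀ k ∈ Wᗮ, ⟪v, k⟫_ℝ = 0) → v ∈ W := by
    intro v hv
    rw [← hcompl]
    rw [Submodule.mem_orthogonal]
    intro k hk
    rw [real_inner_comm]
    exact hv k hk
  have hsplit : ∀ v : V, ∃ p ∈ W, ∃ k ∈ Wᗮ, v = p + k := by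
    intro v
    have htop : W ⊔ Wᗮ = ⊤ := Submodule.sup_orthogonal_of_hasOrthogonalProjection
    have : v ∈ W ⊔ Wᗮ := htop ▸ Submodule.mem_top
    rcases Submodule.mem_sup.mp this with ⟨p, hp, k, hk, rfl⟩
    exact ⟨p, hp, k, hk, rfl⟩
  -- unit vector facts
  have hnormE : ∀ u : V, u ≠ 0 → ‖(‖u‖⁻¹ • u)‖ = 1 := by
    intro u hu0
    rw [norm_smul, norm_inv, norm_norm, inv_mul_cancel₀ (norm_ne_zero_iff.mpr hu0)]
  -- m6 : J u x = lam ‖u‖² x  for u ∈ E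
  have hJEx : ∀ u ∈ E, Jacobi R u x = (lam * ‖u‖^2) • x := by
    intro u hu
    rcases eq_or_ne u 0 with rfl | hu0
    · rw [jac_zero]; simp
    · have hnu : (‖u‖ : ℝ) ≠ 0 := norm_ne_zero_iff.mpr hu0
      have hmemc : ‖u‖⁻¹ • u ∈ E := Submodule.smul_mem _ _ hu
      have heigc : Jacobi R x (‖u‖⁻¹ • u) = lam • (‖u‖⁻¹ • u) := hTE _ hmemc
      have horthc : ⟪x, ‖u‖⁻¹ • u⟫_ℝ = 0 := by
        rw [real_inner_smul_right, hxE u hu, mul_zero]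
      have hA := lemA hR hT hx (hnormE u hu0) horthc heigc
      rw [jac_smul] at hA
      have hA' : (‖u‖⁻¹^2) • Jacobi R u x = lam • x := hA
      have h2 := congrArg (fun v : V => (‖u‖^2 : ℝ) • v) hA'
      simp only [smul_smul] at h2
      rw [show (‖u‖^2 : ℝ) * ‖u‖⁻¹^2 = 1 by field_simp, one_smul] at h2
      rw [h2, mul_comm]
  -- m7 : J e v = lam (v - ⟪e,v⟫ e) for unit e ∈ E, v ∈ E
  have hJEEunit : ∀ e ∈ E, ‖e‖ = 1 → ∀ v ∈ E, Jacobi R e v = lam • (v - ⟪e, v⟫_ℝ • e) := by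
    intro e heE he v hv
    have hee : ⟪e, e⟫_ℝ = 1 := inner_self_one he
    have hv' : v - ⟪e, v⟫_ℝ • e ∈ E := Submodule.sub_mem _ hv (Submodule.smul_mem _ _ heE)
    have hov' : ⟪e, v - ⟪e, v⟫_ℝ • e⟫_ℝ = 0 := by
      rw [inner_sub_right, real_inner_smul_right, hee]; ring
    have hkey : Jacobi R e (v - ⟪e, v⟫_ℝ • e) = lam • (v - ⟪e, v⟫_ℝ • e) := by
      set v' := v - ⟪e, v⟫_ℝ • e with hv'def
      rcases eq_or_ne v' 0 with h0 | h0
      · rw [h0]; simp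
      · have hmemc : ‖v'‖⁻¹ • v' ∈ E := Submodule.smul_mem _ _ hv'
        have hB := lemB hR hT hx (hnormE v' h0) he
          (by rw [real_inner_smul_right, hxE v' hv', mul_zero])
          (hxE e heE)
          (by rw [real_inner_smul_left, real_inner_comm, hov', mul_zero])
          (hTE _ hmemc) hlam (hTE e heE)
        rw [map_smul] at hB
        have h2 := congrArg (fun z : V => (‖v'‖ : ℝ) • z) hB
        simp only [smul_smul] at h2
        rw [show (‖v'‖ : ℝ) * ‖v'‖⁻¹ = 1 by field_simp [norm_ne_zero_iff.mpr h0], one_smul] at h2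
        rw [h2]
        congr 1
        field_simp [norm_ne_zero_iff.mpr h0]
    have := congrArg (fun z : V => Jacobi R e z) (show v = ⟪e, v⟫_ℝ • e + (v - ⟪e, v⟫_ℝ • e) by module)
    simp only [map_add, map_smul, jac_self hR e] at this
    rw [this, hkey]
    module
  -- m8 : J k x = 0 for k ∈ K
  have hJKx : ∀ k ∈ Wᗮ, Jacobi R k x = 0 := by
    intro k hk
    rcases eq_or_ne k 0 with rfl | hk0
    · rw [jac_zero]; simp
    · have horthc : ⟪x, ‖k‖⁻¹ • k⟫_ℝ = 0 := by
        rw [real_inner_smul_right, hKx k hk, mul_zero]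
      have heigc : Jacobi R x (‖k‖⁻¹ • k) = (0:ℝ) • (‖k‖⁻¹ • k) := by
        rw [map_smul, hTK k hk, smul_zero, zero_smul]
      have hA := lemA hR hT hx (hnormE k hk0) horthc heigc
      rw [jac_smul, zero_smul] at hA
      have hA' : (‖k‖⁻¹^2) • Jacobi R k x = 0 := hA
      have := smul_eq_zero.mp hA'
      rcases this with h | h
      · exfalso; exact (pow_ne_zero 2 (inv_ne_zero (norm_ne_zero_iff.mpr hk0))) h
      · exact h
  -- m9 : J k u = 0 for k ∈ K, u ∈ E
  have hJKE : ∀ k ∈ Wᗮ, ∀ u ∈ E, Jacobi R k u = 0 := by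
    intro k hk u hu
    rcases eq_or_ne k 0 with rfl | hk0
    · rw [jac_zero]; simp
    rcases eq_or_ne u 0 with rfl | hu0
    · simp
    have hB := lemB hR hT hx (hnormE u hu0) (hnormE k hk0)
      (by rw [real_inner_smul_right, hxE u hu, mul_zero])
      (by rw [real_inner_smul_right, hKx k hk, mul_zero])
      (by rw [real_inner_smul_left, real_inner_smul_right,
           hKW k hk u (hEW hu), mul_zero, mul_zero])
      (hTE _ (Submodule.smul_mem _ _ hu)) hlam
      (by rw [map_smul, hTK k hk, smul_zero, zero_smul])
    rw [zero_smul, jac_smul, map_smul] at hB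
    have h2 := smul_eq_zero.mp hB
    rcases h2 with h | h
    · exact absurd h (inv_ne_zero (norm_ne_zero_iff.mpr hu0))
    have h3 := smul_eq_zero.mp h
    rcases h3 with h | h
    · exact absurd h (pow_ne_zero 2 (inv_ne_zero (norm_ne_zero_iff.mpr hk0)))
    · exact h
  -- m10 : J u k = 0 for u ∈ E, k ∈ K
  have hJEKunit : ∀ e ∈ E, ‖e‖ = 1 → ∀ k ∈ Wᗮ, ‖k‖ = 1 → Jacobi R e k = 0 := by
    intro e heE he k hk hk1
    set u' : V := Jacobi R e k with hu'def
    have hu'x : ⟪u', x⟫_ℝ = 0 := by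
      rw [hu'def, jac_symm hR e k x, hJEx e heE, he]
      rw [real_inner_smul_right, real_inner_comm x k, hKx k hk]
      ring
    have hu'E : ∀ v ∈ E, ⟪u', v⟫_ℝ = 0 := by
      intro v hv
      rw [hu'def, jac_symm hR e k v, hJEEunit e heE he v hv]
      rw [real_inner_smul_right, inner_sub_right, real_inner_smul_right]
      rw [real_inner_comm v k, hKW k hk v (hEW hv), real_inner_comm e k, hKW k hk e (hEW heE)]
      ring
    have hu'K : u' ∈ Wᗮ := by
      rw [Submodule.mem_orthogonal]
      intro p hp
      rcases hWdecomp p hp with ⟨γ, v, hvE, rfl⟩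
      rw [inner_add_left, real_inner_smul_left, real_inner_comm u' x, hu'x,
        real_inner_comm u' v, hu'E v hvE]
      ring
    -- eigenvalue of J e equals lam
    obtain ⟨mu, hmu0, hsqe⟩ := step3 hR hT he
    have hsqe_pt : ∀ d, Jacobi R e (Jacobi R e d) = mu • Jacobi R e d := by
      intro d
      have h := congrArg (fun L : V →ₗ[ℝ] V => L d) hsqe
      simpa using h
    have hJex : Jacobi R e x = lam • x := by
      have := hJEx e heE; rw [he] at this; simpa using this
    have hmul : mu = lam := by
      have h := hsqe_pt x
      rw [hJex, map_smul, hJex, smul_smul, smul_smul] at h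
      have h2 : (lam * lam - mu * lam) • x = (0:V) := by
        linear_combination (norm := module) h
      rcases smul_eq_zero.mp h2 with h3 | h3
      · have : lam * (lam - mu) = 0 := by ring_nf; linarith [h3]
        rcases mul_eq_zero.mp this with h4 | h4
        · exact absurd h4 hlam
        · linarith
      · exact absurd h3 hx0
    have hJeu' : Jacobi R e u' = lam • u' := by
      have := hsqe_pt k
      rwa [hmul, ← hu'def] at this
    by_contra hne0
    have hnu' : ‖u'‖ ≠ 0 := norm_ne_zero_iff.mpr hne0
    have horth : ⟪e, ‖u'‖⁻¹ • u'⟫_ℝ = 0 := by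
      rw [real_inner_smul_right, real_inner_comm u' e, hu'E e heE, mul_zero]
    have heigc : Jacobi R e (‖u'‖⁻¹ • u') = lam • (‖u'‖⁻¹ • u') := by
      rw [map_smul, hJeu', smul_comm]
    have hA := lemA hR hT he (hnormE u' hne0) horth heigc
    have hzero := hJKE (‖u'‖⁻¹ • u') (Submodule.smul_mem _ (‖u'‖⁻¹) hu'K) e heE
    rw [hzero] at hA
    have := smul_eq_zero.mp hA.symm
    rcases this with h | h
    · exact hlam h
    · rw [h, norm_zero] at he; norm_num at he
  have hJEK : ∀ u ∈ E, ∀ k ∈ Wᗮ, Jacobi R u k = 0 := by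
    intro u hu k hk
    rcases eq_or_ne u 0 with rfl | hu0
    · rw [jac_zero]; simp
    rcases eq_or_ne k 0 with rfl | hk0
    · simp
    have h := hJEKunit _ (Submodule.smul_mem _ ‖u‖⁻¹ hu) (hnormE u hu0)
      _ (Submodule.smul_mem _ ‖k‖⁻¹ hk) (hnormE k hk0)
    rw [jac_smul, LinearMap.smul_apply, map_smul] at h
    rcases smul_eq_zero.mp h with h2 | h2
    · exact absurd h2 (pow_ne_zero 2 (inv_ne_zero (norm_ne_zero_iff.mpr hu0)))
    rcases smul_eq_zero.mp h2 with h3 | h3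
    · exact absurd h3 (inv_ne_zero (norm_ne_zero_iff.mpr hk0))
    · exact h3
  -- polarized : JacobiP k k' x = 0 for k, k' ∈ K
  have hPKKx : ∀ k ∈ Wᗮ, ∀ k' ∈ Wᗮ, JacobiP R k k' x = 0 := by
    intro k hk k' hk'
    have h := jac_add (R := R) k k' x
    rw [hJKx k hk, hJKx k' hk', hJKx _ (Submodule.add_mem _ hk hk')] at h
    have h2 : (2:ℝ) • JacobiP R k k' x = 0 := by
      linear_combination (norm := module) (-1 : ℝ) • h
    rcases smul_eq_zero.mp h2 with h3 | h3
    · norm_num at h3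
    · exact h3
  -- polarized : JacobiP v v' x = lam ⟪v,v'⟫ x for v, v' ∈ E
  have hPEEx : ∀ v ∈ E, ∀ v' ∈ E, JacobiP R v v' x = (lam * ⟪v, v'⟫_ℝ) • x := by
    intro v hv v' hv'
    have h := jac_add (R := R) v v' x
    rw [hJEx v hv, hJEx v' hv', hJEx _ (Submodule.add_mem _ hv hv')] at h
    have hnorm : ‖v + v'‖^2 = ‖v‖^2 + 2 * ⟪v, v'⟫_ℝ + ‖v'‖^2 := norm_add_sq_real v v'
    rw [hnorm] at h
    have h2 : (2:ℝ) • JacobiP R v v' x = (2 * (lam * ⟪v, v'⟫_ℝ)) • x := by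
      linear_combination (norm := module) (-1 : ℝ) • h
    have h3 := congrArg (fun z : V => (1/2 : ℝ) • z) h2
    simp only [smul_smul] at h3
    rw [show (1/2 : ℝ) * 2 = 1 by norm_num, one_smul] at h3
    rw [h3, show (1/2 : ℝ) * (2 * (lam * ⟪v, v'⟫_ℝ)) = lam * ⟪v, v'⟫_ℝ by ring]
  -- m11 : JacobiP x u k = 0 for u ∈ E, k ∈ K
  have hPxEK : ∀ u ∈ E, ∀ k ∈ Wᗮ, JacobiP R x u k = 0 := by
    have unitcase : ∀ e ∈ E, ‖e‖ = 1 → ∀ κ ∈ Wᗮ, ‖κ‖ = 1 → JacobiP R x e κ = 0 := by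
      intro e heE he κ hκ hκ1
      have hee : ⟪e, e⟫_ℝ = 1 := inner_self_one he
      have hκκ : ⟪κ, κ⟫_ℝ = 1 := inner_self_one hκ1
      have hPxex : JacobiP R x e x = -(lam/2) • e := by
        rw [jacP_aba hR x e, hTE e heE]; module
      set t : V := JacobiP R x e κ with htdef
      have htx : ⟪t, x⟫_ℝ = 0 := by
        rw [htdef, jacP_selfadj hR x e κ x, hPxex]
        rw [real_inner_smul_right, real_inner_comm e κ, hKW κ hκ e (hEW heE)]
        ring
      have htK : ∀ k' ∈ Wᗮ, ⟪t, k'⟫_ℝ = 0 := by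
        intro k' hk'
        rw [htdef, jacP_swap hR x e κ k', hPKKx κ hκ k' hk']
        simp
      have htW : t ∈ W := hWofK t htK
      have htE : t ∈ E := by
        rcases hWdecomp t htW with ⟨γ, v, hvE, hteq⟩
        have : γ = 0 := by
          have h := htx
          rw [hteq, inner_add_left, real_inner_smul_left, hxx,
            real_inner_comm x v, hxE v hvE] at h
          linarith
        rw [this, zero_smul, zero_add] at hteq
        rw [hteq]; exact hvE
      -- the commutator computation
      have horth2 : ⟪x + κ, x + e - κ⟫_ℝ = 0 := by
        rw [inner_add_left, inner_sub_right, inner_sub_right, inner_add_right, inner_add_right]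
        rw [hxx, hκκ, hxE e heE, hKx κ hκ, real_inner_comm x κ, hKx κ hκ,
          real_inner_comm e κ, hKW κ hκ e (hEW heE)]
        ring
      have h2a : Jacobi R (x + κ) κ = 0 := by
        rw [jac_add, hTK κ hκ, jac_self hR κ, jacP_comm, jacP_aba hR κ x, hJKx κ hκ]
        module
      have h2b : Jacobi R (x + e - κ) κ = (2:ℝ) • t := by
        rw [jac_sub, jac_add, jac_self hR κ, hTK κ hκ, hJEKunit e heE he κ hκ hκ1]
        rw [jacP_add_left, LinearMap.add_apply]
        rw [show JacobiP R x κ κ = JacobiP R κ x κ from by rw [jacP_comm]]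
        rw [jacP_aba hR κ x, hJKx κ hκ]
        rw [show JacobiP R e κ κ = JacobiP R κ e κ from by rw [jacP_comm]]
        rw [jacP_aba hR κ e, hJKE κ hκ e heE, ← htdef]
        module
      have hc := comm_pt hT horth2 κ
      rw [h2a, h2b, map_zero, map_smul] at hc
      have hc2 : Jacobi R (x + κ) t = 0 := by
        rcases smul_eq_zero.mp hc with h | h
        · norm_num at h
        · exact h
      rw [jac_add, hTE t htE, hJKE κ hκ t htE] at hc2
      have hc3 : lam • t + (2:ℝ) • JacobiP R x κ t = 0 := by
        linear_combination (norm := module) hc2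
      have hinner := congrArg (fun z : V => ⟪z, t⟫_ℝ) hc3
      simp only [inner_add_left, real_inner_smul_left, inner_zero_left] at hinner
      have hPt : ⟪JacobiP R x κ t, t⟫_ℝ = 0 := by
        rw [jacP_swap hR x κ t t]
        have hval : JacobiP R t t x = (lam * ⟪t, t⟫_ℝ) • x := by
          rw [jacP_self, real_inner_self_eq_norm_sq]
          exact hJEx t htE
        rw [hval, real_inner_smul_left, hKx κ hκ, mul_zero]
      rw [hPt] at hinner
      have htt : ⟪t, t⟫_ℝ = 0 := by
        rcases mul_eq_zero.mp (by linarith : lam * ⟪t, t⟫_ℝ = 0) with h | h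
        · exact absurd h hlam
        · exact h
      exact inner_self_eq_zero.mp htt
    intro u hu k hk
    rcases eq_or_ne u 0 with rfl | hu0
    · rw [jacP_zero_right]; rfl
    rcases eq_or_ne k 0 with rfl | hk0
    · simp
    have h := unitcase _ (Submodule.smul_mem _ ‖u‖⁻¹ hu) (hnormE u hu0)
      _ (Submodule.smul_mem _ ‖k‖⁻¹ hk) (hnormE k hk0)
    rw [jacP_smul_right, LinearMap.smul_apply, map_smul] at h
    rcases smul_eq_zero.mp h with h2 | h2
    · exact absurd h2 (inv_ne_zero (norm_ne_zero_iff.mpr hu0))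
    rcases smul_eq_zero.mp h2 with h3 | h3
    · exact absurd h3 (inv_ne_zero (norm_ne_zero_iff.mpr hk0))
    · exact h3
  -- m12 : JacobiP x u x
  have hPxEx : ∀ u ∈ E, JacobiP R x u x = -(lam/2) • u := by
    intro u hu; rw [jacP_aba hR x u, hTE u hu]; module
  -- m13 : JacobiP x u v for u v ∈ E
  have hPxEE : ∀ u ∈ E, ∀ v ∈ E, JacobiP R x u v = (-(lam/2) * ⟪u, v⟫_ℝ) • x := by
    intro u hu v hv
    set d : V := JacobiP R x u v - (-(lam/2) * ⟪u, v⟫_ℝ) • x with hd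
    have c1 : ⟪x, JacobiP R x u v⟫_ℝ = -(lam/2) * ⟪u, v⟫_ℝ := by
      rw [real_inner_comm (JacobiP R x u v) x, jacP_selfadj hR x u v x, hPxEx u hu,
        real_inner_smul_right, real_inner_comm u v]
    have hdK : d ∈ Wᗮ := by
      rw [Submodule.mem_orthogonal]
      intro p hp
      rcases hWdecomp p hp with ⟨γ, v', hv'E, rfl⟩
      have c2 : ⟪v', JacobiP R x u v⟫_ℝ = 0 := by
        rw [real_inner_comm (JacobiP R x u v) v', jacP_swap hR x u v v',
          hPEEx v hv v' hv'E, real_inner_smul_left, hxE u hu, mul_zero]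
      rw [hd, inner_sub_right, inner_add_left, inner_add_left, real_inner_smul_left,
        real_inner_smul_left, real_inner_smul_right, real_inner_smul_right, c1, c2,
        hxx, real_inner_comm x v', hxE v' hv'E]
      ring
    have hdO : ∀ k ∈ Wᗮ, ⟪d, k⟫_ℝ = 0 := by
      intro k hk
      rw [hd, inner_sub_left, real_inner_smul_left, hKx k hk,
        jacP_selfadj hR x u v k, hPxEK u hu k hk, inner_zero_right]
      ring
    have hd0 : d = 0 := inner_self_eq_zero.mp (hdO d hdK)
    rw [hd] at hd0
    linear_combination (norm := module) hd0
  -- general J u v on E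
  have hJEE : ∀ u ∈ E, ∀ v ∈ E, Jacobi R u v = lam • (‖u‖^2 • v - ⟪u, v⟫_ℝ • u) := by
    intro u hu v hv
    rcases eq_or_ne u 0 with rfl | hu0
    · rw [jac_zero]; simp
    have hnu : (‖u‖ : ℝ) ≠ 0 := norm_ne_zero_iff.mpr hu0
    have h := hJEEunit _ (Submodule.smul_mem _ ‖u‖⁻¹ hu) (hnormE u hu0) v hv
    rw [jac_smul, LinearMap.smul_apply, real_inner_smul_left] at h
    have h2 := congrArg (fun z : V => (‖u‖^2 : ℝ) • z) h
    simp only [smul_smul] at h2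
    rw [show (‖u‖^2:ℝ) * ‖u‖⁻¹^2 = 1 by field_simp, one_smul] at h2
    rw [h2]
    match_scalars <;> field_simp <;> ring
  -- MST on W
  have hMST : ∀ w ∈ W, ‖w‖ = 1 → ∀ p ∈ W, Jacobi R w p = lam • (p - ⟪w, p⟫_ℝ • w) := by
    intro w hw hw1 p hp
    rcases hWdecomp w hw with ⟨α, u, hu, rfl⟩
    rcases hWdecomp p hp with ⟨γ, v, hv, rfl⟩
    have hxu : ⟪x, u⟫_ℝ = 0 := hxE u hu
    have hα : α^2 + ‖u‖^2 = 1 := by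
      have h := norm_add_sq_real (α • x) u
      rw [hw1, norm_smul, real_inner_smul_left, hxu, hx] at h
      simp only [Real.norm_eq_abs, mul_one, mul_zero, one_pow, mul_pow, sq_abs] at h
      linarith
    have hb : ‖u‖^2 = 1 - α^2 := by linarith
    have hwp : ⟪α • x + u, γ • x + v⟫_ℝ = α * γ + ⟪u, v⟫_ℝ := by
      have h2 : ⟪u, x⟫_ℝ = 0 := (real_inner_comm x u).trans hxu
      rw [inner_add_left, inner_add_right, inner_add_right, real_inner_smul_left,
        real_inner_smul_left, real_inner_smul_right, real_inner_smul_right, hxx,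
        hxE v hv, h2]
      ring
    have e1 : Jacobi R x (γ • x + v) = lam • v := by
      rw [map_add, map_smul, jac_self hR, hTE v hv]; module
    have e2 : Jacobi R u (γ • x + v) =
        (γ * (lam * ‖u‖^2)) • x + lam • (‖u‖^2 • v - ⟪u, v⟫_ℝ • u) := by
      rw [map_add, map_smul, hJEx u hu, hJEE u hu v hv]; module
    have e3 : JacobiP R x u (γ • x + v) =
        (γ * (-(lam/2))) • u + (-(lam/2) * ⟪u, v⟫_ℝ) • x := by
      rw [map_add, map_smul, hPxEx u hu, hPxEE u hu v hv]; module
    rw [jac_add, jac_smul, LinearMap.smul_apply, jacP_smul_left, LinearMap.smul_apply,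
      e1, e2, e3, hwp, hb]
    module
  -- conclusions
  intro w hw hw1
  have hvanish : ∀ k ∈ Wᗮ, Jacobi R w k = 0 := by
    intro k hk
    rcases hWdecomp w hw with ⟨α, u, hu, rfl⟩
    rw [jac_add, jac_smul, LinearMap.smul_apply, hTK k hk, hJEK u hu k hk,
      jacP_smul_left, LinearMap.smul_apply, hPxEK u hu k hk]
    simp
  refine ⟨?_, fun k hk => hvanish k hk, ?_⟩
  · rintro _ ⟨v, rfl⟩
    rcases hsplit v with ⟨p, hp, k, hk, rfl⟩
    rw [map_add, hvanish k hk, add_zero, hMST w hw hw1 p hp]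
    exact Submodule.smul_mem _ _ (Submodule.sub_mem _ hp (Submodule.smul_mem _ _ hw))
  · set g : V ≃ₗᵢ[ℝ] V := Submodule.reflection (ℝ ∙ (x - w))ᗮ with hg
    have hgx : g x = w := Submodule.reflection_sub (by rw [hx, hw1])
    have hgK : ∀ k ∈ Wᗮ, g k = k := by
      intro k hk
      apply Submodule.reflection_mem_subspace_eq_self
      rw [Submodule.mem_orthogonal_singleton_iff_inner_right, inner_sub_left,
        hKx k hk, hKW k hk w hw]
      ring
    have hgW : ∀ p ∈ W, g p ∈ W := by
      intro p hp
      apply hWofK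
      intro k hk
      rw [← hgK k hk, LinearIsometryEquiv.inner_map_map]
      exact hKW k hk p hp
    have hH : ∀ v₀ : V, Jacobi R w (g v₀) = g (Jacobi R x v₀) := by
      intro v₀
      rcases hsplit v₀ with ⟨p, hp, k, hk, rfl⟩
      rcases hWdecomp p hp with ⟨γ, v, hv, rfl⟩
      have hJx : Jacobi R x (γ • x + v + k) = lam • v := by
        rw [map_add, map_add, map_smul, jac_self hR, hTK k hk, hTE v hv]; module
      have hgsplit : g (γ • x + v + k) = γ • w + g v + k := by
        rw [map_add, map_add, map_smul, hgx, hgK k hk]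
      have hgvW : g v ∈ W := hgW v (hEW hv)
      have hgpW : γ • w + g v ∈ W := Submodule.add_mem _ (Submodule.smul_mem _ _ hw) hgvW
      have hwgv : ⟪w, g v⟫_ℝ = 0 := by
        rw [← hgx, LinearIsometryEquiv.inner_map_map]
        exact hxE v hv
      rw [hJx, hgsplit, map_smul, map_add, hvanish k hk, add_zero, hMST w hw hw1 _ hgpW,
        inner_add_right, real_inner_smul_right, inner_self_one hw1, hwgv]
      module
    refine ⟨g.toLinearEquiv, ?_⟩
    apply LinearMap.ext
    intro v
    have hv' := hH (g.symm v)
    rw [LinearIsometryEquiv.apply_symm_apply] at hv'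
    simpa using hv'
end
end
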